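/- arXiv:2601.05728 — 6 statements merged into one kernel-verified Lean document; each statement's English description precedes it below -/
import Mathlib

section
/- Let X be a random variable, D a {0,1}-valued random variable, Z a discrete random variable, and Y(d,z) integrable potential outcomes with Y = Y(d,z) on {D = d, Z = z}. Assume Y(d,z) ⟂ (D,Z) | X and P(D = d, Z = z | X) > 0 almost surely. Then E[Y(d,z)] = E[ Y · 1{D = d, Z = z} / P(D = d, Z = z | X) ]. -/
open MeasureTheory ProbabilityTheory Set Filter

open scoped Topology

/-! Given `m`, the conditional law of `f` on the event `A = {g ∈ t}` is its full conditional law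
(conditional independence, checked fiberwise on the π-system of rational half-lines), so
`E[1_A φ(f) | m] = q E[φ(f) | m]` with `q = P(A | m)`. Dividing by `q > 0` and integrating
gives `E[1_A f / q] = E[f]`; integrability of `1_A f / q` follows from the same identity for
`|f|`, by monotone convergence along the truncations `min q⁻¹ n`. -/

section

variable {Ω : Type*}

lemma map_restrict_eq_smul_map_of_forall_rat [MeasurableSpace Ω] {ν : Measure Ω}
    [IsProbabilityMeasure ν] {f : Ω → ℝ} {A : Set Ω} (hf : Measurable f)
    (h : ∀ r : ℚ, ν (f ⁻¹' Iic (r : ℝ) ∩ A) = ν (f ⁻¹' Iic (r : ℝ)) * ν A) :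
    (ν.restrict A).map f = ν A • ν.map f := by
  refine ext_of_generate_finite _ (Real.borel_eq_generateFrom_Iic_rat ▸ BorelSpace.measurable_eq)
    Real.isPiSystem_Iic_rat ?_ ?_
  · simp only [mem_iUnion, mem_singleton_iff, forall_exists_index]
    rintro _ r rfl
    rw [Measure.map_apply hf measurableSet_Iic, Measure.restrict_apply (hf measurableSet_Iic),
      Measure.smul_apply, Measure.map_apply hf measurableSet_Iic, h r, smul_eq_mul, mul_comm]
  · simp [Measure.map_apply hf MeasurableSet.univ]

lemma integral_indicator_comp_eq_mul_of_forall_rat [MeasurableSpace Ω] {ν : Measure Ω}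
    [IsProbabilityMeasure ν] {f : Ω → ℝ} {A : Set Ω} (hf : Measurable f) (hA : MeasurableSet A)
    (h : ∀ r : ℚ, ν (f ⁻¹' Iic (r : ℝ) ∩ A) = ν (f ⁻¹' Iic (r : ℝ)) * ν A)
    {φ : ℝ → ℝ} (hφ : Measurable φ) :
    ∫ ω, A.indicator (φ ∘ f) ω ∂ν = ν.real A * ∫ ω, φ (f ω) ∂ν := by
  rw [integral_indicator hA, Function.comp_def,
    ← integral_map (μ := ν.restrict A) hf.aemeasurable hφ.aestronglyMeasurable,
    map_restrict_eq_smul_map_of_forall_rat hf h, integral_smul_measure,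
    integral_map hf.aemeasurable hφ.aestronglyMeasurable, smul_eq_mul, measureReal_def]

lemma ProbabilityTheory.CondIndepFun.condExp_indicator_comp_ae_eq_mul {β : Type*}
    [MeasurableSpace β] {m mΩ : MeasurableSpace Ω} [StandardBorelSpace Ω] {hm : m ≤ mΩ}
    {μ : Measure Ω} [IsFiniteMeasure μ] {f : Ω → ℝ} {g : Ω → β} {t : Set β}
    (hfg : CondIndepFun m hm f g μ) (hf : Measurable f) (hg : Measurable g)
    (ht : MeasurableSet t) {φ : ℝ → ℝ} (hφ : Measurable φ) (hφf : Integrable (φ ∘ f) μ) :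
    μ[(g ⁻¹' t).indicator (φ ∘ f) | m] =ᵐ[μ] μ⟦g ⁻¹' t | m⟧ * μ[φ ∘ f | m] := by
  have hindep : ∀ᵐ ω ∂μ, ∀ r : ℚ,
      condExpKernel μ m ω (f ⁻¹' Iic (r : ℝ) ∩ g ⁻¹' t)
        = condExpKernel μ m ω (f ⁻¹' Iic (r : ℝ)) * condExpKernel μ m ω (g ⁻¹' t) :=
    ae_all_iff.2 fun r ↦ ae_of_ae_trim hm <|
      Kernel.IndepFun.measure_inter_preimage_eq_mul hfg _ _ measurableSet_Iic ht
  filter_upwards [condExp_ae_eq_integral_condExpKernel hm (hφf.indicator (hg ht)),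
    condExp_ae_eq_integral_condExpKernel hm hφf, condExpKernel_ae_eq_condExp hm (hg ht),
    hindep] with ω hind hφω hq hω
  rw [Pi.mul_apply, hind, hφω, ← hq]
  exact integral_indicator_comp_eq_mul_of_forall_rat hf (hg ht) hω hφ

lemma integrable_mul_of_integrable_mul_condExp {m mΩ : MeasurableSpace Ω} (hm : m ≤ mΩ)
    {μ : Measure Ω} [SigmaFinite (μ.trim hm)] {g f : Ω → ℝ} (hg : StronglyMeasurable[m] g)
    (hg0 : 0 ≤ᵐ[μ] g) (hf : Integrable f μ) (hf0 : 0 ≤ᵐ[μ] f)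
    (hgf : Integrable (g * μ[f | m]) μ) : Integrable (g * f) μ := by
  set gₙ : ℕ → Ω → ℝ := fun n ω ↦ min (g ω) n
  have hgₙ_meas : ∀ n, StronglyMeasurable[m] (gₙ n) := fun n ↦
    (hg.measurable.min measurable_const).stronglyMeasurable
  have hgₙ_nonneg : ∀ n, 0 ≤ᵐ[μ] gₙ n := fun n ↦
    hg0.mono fun ω hω ↦ le_min hω n.cast_nonneg
  have hgₙf_int : ∀ n, Integrable (gₙ n * f) μ := fun n ↦
    hf.bdd_mul ((hgₙ_meas n).mono hm).aestronglyMeasurable (c := n) <|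
      (hgₙ_nonneg n).mono fun ω hω ↦ by
        rw [Real.norm_of_nonneg hω]; exact min_le_right _ _
  have hbound : ∀ n, ∫ ω, (gₙ n * f) ω ∂μ ≤ ∫ ω, (g * μ[f | m]) ω ∂μ := fun n ↦ by
    rw [← integral_condExp hm]
    refine integral_mono_ae integrable_condExp hgf ?_
    filter_upwards [condExp_mul_of_stronglyMeasurable_left (hgₙ_meas n) (hgₙf_int n) hf,
      condExp_nonneg hf0] with ω hω hfω
    rw [hω]
    exact mul_le_mul_of_nonneg_right (min_le_left _ _) hfω
  have hmono : ∀ᵐ ω ∂μ, Monotone fun n ↦ ENNReal.ofReal ((gₙ n * f) ω) := by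
    filter_upwards [hf0] with ω hω n k hnk
    exact ENNReal.ofReal_le_ofReal <|
      mul_le_mul_of_nonneg_right (min_le_min le_rfl (Nat.cast_le.2 hnk)) hω
  have htendsto : ∀ᵐ ω ∂μ, Tendsto (fun n ↦ ENNReal.ofReal ((gₙ n * f) ω)) atTop
      (𝓝 (ENNReal.ofReal ((g * f) ω))) := ae_of_all _ fun ω ↦ by
    refine tendsto_atTop_of_eventually_const (i₀ := ⌈g ω⌉₊) fun n hn ↦ ?_
    simp only [gₙ, Pi.mul_apply, min_eq_left ((Nat.le_ceil _).trans (Nat.cast_le.2 hn))]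
  have hgf0 : 0 ≤ᵐ[μ] g * f := by
    filter_upwards [hg0, hf0] with ω hgω hfω using mul_nonneg hgω hfω
  refine ⟨(hg.mono hm).aestronglyMeasurable.mul hf.aestronglyMeasurable,
    (hasFiniteIntegral_iff_ofReal hgf0).2 <|
    lt_of_le_of_lt (b := ENNReal.ofReal (∫ ω, (g * μ[f | m]) ω ∂μ)) ?_ ENNReal.ofReal_lt_top⟩
  refine le_of_tendsto' (lintegral_tendsto_of_tendsto_of_monotone
    (fun n ↦ (hgₙf_int n).aemeasurable.ennreal_ofReal) hmono htendsto) fun n ↦ ?_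
  rw [← ofReal_integral_eq_lintegral_ofReal (hgₙf_int n)]
  · exact ENNReal.ofReal_le_ofReal (hbound n)
  · filter_upwards [hgₙ_nonneg n, hf0] with ω hgω hfω using mul_nonneg hgω hfω

theorem ProbabilityTheory.CondIndepFun.integral_eq_integral_indicator_div_condExp {β : Type*}
    [MeasurableSpace β] {m mΩ : MeasurableSpace Ω} [StandardBorelSpace Ω] {hm : m ≤ mΩ}
    {μ : Measure Ω} [IsFiniteMeasure μ] {f : Ω → ℝ} {g : Ω → β} {t : Set β}
    (hfg : CondIndepFun m hm f g μ) (hf : Measurable f) (hg : Measurable g)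
    (ht : MeasurableSet t) (hfi : Integrable f μ) (hpos : ∀ᵐ ω ∂μ, 0 < (μ⟦g ⁻¹' t | m⟧) ω) :
    ∫ ω, f ω ∂μ = ∫ ω, (g ⁻¹' t).indicator f ω / (μ⟦g ⁻¹' t | m⟧) ω ∂μ := by
  set A := g ⁻¹' t
  set q := μ⟦A | m⟧
  have hA : MeasurableSet A := hg ht
  have hq_inv : StronglyMeasurable[m] q⁻¹ :=
    stronglyMeasurable_condExp.measurable.inv.stronglyMeasurable
  have hcancel : ∀ h : Ω → ℝ, q⁻¹ * (q * h) =ᵐ[μ] h := fun h ↦ by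
    filter_upwards [hpos] with ω hω
    simp [inv_mul_cancel_left₀ hω.ne']
  have hfac : μ[A.indicator f | m] =ᵐ[μ] q * μ[f | m] :=
    hfg.condExp_indicator_comp_ae_eq_mul hf hg ht measurable_id hfi
  have hfac_abs : μ[A.indicator (abs ∘ f) | m] =ᵐ[μ] q * μ[abs ∘ f | m] :=
    hfg.condExp_indicator_comp_ae_eq_mul hf hg ht measurable_abs hfi.abs
  have hint_abs : Integrable (q⁻¹ * A.indicator (abs ∘ f)) μ :=
    integrable_mul_of_integrable_mul_condExp hm hq_inv
      (hpos.mono fun ω hω ↦ (inv_pos.2 hω).le) (hfi.abs.indicator hA)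
      (ae_of_all _ fun ω ↦ indicator_nonneg (fun _ _ ↦ abs_nonneg _) ω)
      (integrable_condExp.congr (hfac_abs.mul_left.trans (hcancel _)).symm)
  have hint : Integrable (q⁻¹ * A.indicator f) μ := by
    refine hint_abs.mono ((hq_inv.mono hm).aestronglyMeasurable.mul
      (hfi.indicator hA).aestronglyMeasurable) (ae_of_all _ fun ω ↦ ?_)
    rw [indicator_comp_of_zero abs_zero]
    simp
  calc ∫ ω, f ω ∂μ = ∫ ω, μ[f | m] ω ∂μ := (integral_condExp hm).symm
    _ = ∫ ω, μ[q⁻¹ * A.indicator f | m] ω ∂μ := by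
      refine integral_congr_ae ?_
      exact ((condExp_mul_of_stronglyMeasurable_left hq_inv hint (hfi.indicator hA)).trans
        (hfac.mul_left.trans (hcancel _))).symm
    _ = ∫ ω, A.indicator f ω / q ω ∂μ := by
      rw [integral_condExp hm]
      simp only [Pi.mul_apply, Pi.inv_apply, div_eq_inv_mul]

end

theorem stmt_1_general {Ω : Type*} [MeasurableSpace Ω] [StandardBorelSpace Ω]
    (P : Measure Ω) [IsProbabilityMeasure P]
    (Y Ypo : Ω → ℝ) (D : Ω → ℕ) (Z : Ω → ℤ) (X : Ω → ℝ) (d : ℕ) (z : ℤ)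
    (hD : Measurable D) (hZ : Measurable Z) (hX : Measurable X) (hYpoMeas : Measurable Ypo)
    (hYpoInt : Integrable Ypo P)
    (hcons : ∀ ω, D ω = d → Z ω = z → Y ω = Ypo ω)
    (hcondindep : CondIndepFun (MeasurableSpace.comap X inferInstance) hX.comap_le
      Ypo (fun ω => (D ω, Z ω)) P)
    (hpos : ∀ᵐ ω ∂P,
      0 < (P[({ω' | D ω' = d ∧ Z ω' = z}).indicator (fun _ => (1 : ℝ))
            | MeasurableSpace.comap X inferInstance]) ω) :
    ∫ ω, Ypo ω ∂P
      = ∫ ω, Y ω * ({ω' | D ω' = d ∧ Z ω' = z}).indicator (fun _ => (1 : ℝ)) ω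
          / (P[({ω' | D ω' = d ∧ Z ω' = z}).indicator (fun _ => (1 : ℝ))
              | MeasurableSpace.comap X inferInstance]) ω ∂P := by
  have hA : {ω' | D ω' = d ∧ Z ω' = z} = (fun ω => (D ω, Z ω)) ⁻¹' {(d, z)} := by
    ext; simp
  rw [hA] at hpos
  rw [hcondindep.integral_eq_integral_indicator_div_condExp hYpoMeas (hD.prodMk hZ)
    (measurableSet_singleton _) hYpoInt hpos, ← hA]
  congr with ω
  by_cases hω : ω ∈ {ω' | D ω' = d ∧ Z ω' = z}
  · rw [indicator_of_mem hω, indicator_of_mem hω, mul_one, hcons ω hω.1 hω.2]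
  · rw [indicator_of_notMem hω, indicator_of_notMem hω, mul_zero]

/-- Conditional (selection-on-observables) IPW identification of the mean potential
outcome: conditioning on covariates `X` renders the treatment-exposure pair exogenous. -/
theorem stmt_1 {Ω : Type*} [MeasurableSpace Ω] [StandardBorelSpace Ω]
    (P : Measure Ω) [IsProbabilityMeasure P]
    (Y Ypo : Ω → ℝ) (D : Ω → ℕ) (Z : Ω → ℤ) (X : Ω → ℝ) (d : ℕ) (z : ℤ)
    (hD : Measurable D) (hZ : Measurable Z) (hX : Measurable X) (hYpoMeas : Measurable Ypo)
    (hDbin : ∀ ω, D ω = 0 ∨ D ω = 1)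
    (hYint : Integrable Y P) (hYpoInt : Integrable Ypo P)
    (hcons : ∀ ω, D ω = d → Z ω = z → Y ω = Ypo ω)
    (hcondindep : CondIndepFun (MeasurableSpace.comap X inferInstance) hX.comap_le
      Ypo (fun ω => (D ω, Z ω)) P)
    (hpos : ∀ᵐ ω ∂P,
      0 < (P[({ω' | D ω' = d ∧ Z ω' = z}).indicator (fun _ => (1 : ℝ))
            | MeasurableSpace.comap X inferInstance]) ω) :
    ∫ ω, Ypo ω ∂P
      = ∫ ω, Y ω * ({ω' | D ω' = d ∧ Z ω' = z}).indicator (fun _ => (1 : ℝ)) ω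
          / (P[({ω' | D ω' = d ∧ Z ω' = z}).indicator (fun _ => (1 : ℝ))
              | MeasurableSpace.comap X inferInstance]) ω ∂P :=
  stmt_1_general P Y Ypo D Z X d z hD hZ hX hYpoMeas hYpoInt hcons hcondindep hpos
end

section
/- Let Y be integrable, D ∈ {0,1}, Z discrete, X a random variable. Define μ(d,z,X) = E[Y | D = d, Z = z, X] and p(d,z | X) = P(D = d, Z = z | X) > 0 a.s. Suppose potential outcomes Y(d,z) satisfy consistency (Y = Y(d,z) on {D=d,Z=z}) and conditional exogeneity Y(d,z) ⟂ (D,Z) | X. Then E[Y(d,z)] = E[ μ(d,z,X) + (1{D=d, Z=z} / p(d,z|X)) · (Y − μ(d,z,X)) ]. -/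
/-! Put `q = P[1_A | m]` and `g = P[Y(d,z) | m]`, where `A = {D = d, Z = z}` and `m` is generated
by `X`. Conditional independence makes `1_A` and `Y(d,z)` conditionally uncorrelated,
`P[1_A Y(d,z) | m] = q g`; with consistency this gives `μ = g` a.e., so the AIPW integrand is a.e.
`g + q⁻¹ 1_A Y(d,z) - q⁻¹ 1_A g`. Pulling the `m`-measurable weight `q⁻¹` out of a conditional
expectation, each weighted term integrates to `∫ g = E[Y(d,z)]`. The only delicate point is the
integrability of these terms, as `q⁻¹` is unbounded; it comes from `∫⁻ w r = ∫⁻ w P[r | m]` for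
`m`-measurable `w ≥ 0` and integrable `r ≥ 0`. -/

open MeasureTheory ProbabilityTheory Set
open scoped ENNReal

theorem Set.mul_indicator_one_eq_indicator {ι M : Type*} [MulZeroOneClass M] (f : ι → M)
    (s : Set ι) : f * s.indicator 1 = s.indicator f := by
  ext i; by_cases hi : i ∈ s <;> simp [hi]

section
variable {Ω : Type*} {m mΩ : MeasurableSpace Ω} {P : Measure Ω} [IsFiniteMeasure P]

theorem lintegral_ofReal_mul_eq_lintegral_ofReal_condExp_mul (hm : m ≤ mΩ)
    {r : Ω → ℝ} (hr0 : 0 ≤ᵐ[P] r) (hr : Integrable r P) {w : Ω → ℝ≥0∞} (hw : Measurable[m] w) :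
    ∫⁻ ω, ENNReal.ofReal (r ω) * w ω ∂P = ∫⁻ ω, ENNReal.ofReal (P[r|m] ω) * w ω ∂P := by
  -- As densities, `r` and `P[r|m]` give measures that agree on `m`, which is all `w` sees.
  have htrim : (P.withDensity fun ω => ENNReal.ofReal (r ω)).trim hm
      = (P.withDensity fun ω => ENNReal.ofReal (P[r|m] ω)).trim hm := by
    refine @Measure.ext _ m _ _ fun s hs => ?_
    rw [trim_measurableSet_eq hm hs, trim_measurableSet_eq hm hs, withDensity_apply _ (hm s hs),
      withDensity_apply _ (hm s hs),
      ← ofReal_integral_eq_lintegral_ofReal hr.integrableOn (ae_restrict_of_ae hr0),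
      ← ofReal_integral_eq_lintegral_ofReal integrable_condExp.integrableOn
        (ae_restrict_of_ae (condExp_nonneg hr0)), setIntegral_condExp hm hr hs]
  have hw' : AEMeasurable w P := (hw.mono hm le_rfl).aemeasurable
  calc ∫⁻ ω, ENNReal.ofReal (r ω) * w ω ∂P
      = ∫⁻ ω, w ω ∂(P.withDensity fun ω => ENNReal.ofReal (r ω)) :=
        (lintegral_withDensity_eq_lintegral_mul₀ hr.1.aemeasurable.ennreal_ofReal hw').symm
    _ = ∫⁻ ω, w ω ∂(P.withDensity fun ω => ENNReal.ofReal (P[r|m] ω)) := by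
        rw [← lintegral_trim hm hw, htrim, lintegral_trim hm hw]
    _ = ∫⁻ ω, ENNReal.ofReal (P[r|m] ω) * w ω ∂P :=
        lintegral_withDensity_eq_lintegral_mul₀
          (stronglyMeasurable_condExp.mono hm).aestronglyMeasurable.aemeasurable.ennreal_ofReal hw'

theorem integrable_mul_of_integrable_abs_mul_condExp_abs (hm : m ≤ mΩ)
    {w r : Ω → ℝ} (hw : StronglyMeasurable[m] w) (hr : Integrable r P)
    (h : Integrable (fun ω => |w ω| * P[fun ω => |r ω| | m] ω) P) :
    Integrable (fun ω => w ω * r ω) P := by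
  refine ⟨(hw.mono hm).aestronglyMeasurable.mul hr.1, ?_⟩
  have hr_abs : 0 ≤ᵐ[P] fun ω => |r ω| := Filter.Eventually.of_forall fun ω => abs_nonneg _
  calc ∫⁻ ω, ‖w ω * r ω‖ₑ ∂P = ∫⁻ ω, ENNReal.ofReal |r ω| * ‖w ω‖ₑ ∂P := by
        simp only [enorm_mul, Real.enorm_eq_ofReal_abs, mul_comm]
    _ = ∫⁻ ω, ENNReal.ofReal (P[fun ω => |r ω| | m] ω) * ‖w ω‖ₑ ∂P :=
        lintegral_ofReal_mul_eq_lintegral_ofReal_condExp_mul hm hr_abs hr.abs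
          (@StronglyMeasurable.enorm _ m _ _ _ _ hw)
    _ = ∫⁻ ω, ‖|w ω| * P[fun ω => |r ω| | m] ω‖ₑ ∂P := by
        refine lintegral_congr_ae ?_
        filter_upwards [condExp_nonneg (m := m) hr_abs] with ω hω
        rw [enorm_mul, Real.enorm_of_nonneg hω, Real.enorm_abs, mul_comm]
    _ < ∞ := h.2

theorem ProbabilityTheory.CondIndepFun.condExp_mul_ae_eq [StandardBorelSpace Ω]
    {hm : m ≤ mΩ} {f g : Ω → ℝ} (h : CondIndepFun m hm f g P) (hf : Measurable f)
    (hg : Measurable g) (hfi : Integrable f P) (hgi : Integrable g P)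
    (hfg : Integrable (f * g) P) :
    P[f * g|m] =ᵐ[P] P[f|m] * P[g|m] := by
  have hker := (condIndepFun_iff_map_prod_eq_prod_map_map hf hg).1 h
  have hindep : ∀ᵐ ω ∂P, IndepFun f g (condExpKernel P m ω) := by
    refine ae_of_ae_trim hm (hker.mono fun ω hω => ?_)
    rw [indepFun_iff_map_prod_eq_prod_map_map hf.aemeasurable hg.aemeasurable]
    simpa [Kernel.map_apply _ (hf.prodMk hg), Kernel.map_apply _ hf, Kernel.map_apply _ hg,
      Kernel.prod_apply] using hω
  filter_upwards [condExp_ae_eq_integral_condExpKernel hm hfg,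
    condExp_ae_eq_integral_condExpKernel hm hfi, condExp_ae_eq_integral_condExpKernel hm hgi,
    hindep] with ω hfg_eq hf_eq hg_eq hω
  rw [hfg_eq, Pi.mul_apply, hf_eq, hg_eq]
  exact hω.integral_mul_eq_mul_integral hf.aestronglyMeasurable hg.aestronglyMeasurable

theorem ProbabilityTheory.CondIndepFun.condExp_indicator_ae_eq_mul [StandardBorelSpace Ω]
    {hm : m ≤ mΩ} {A : Set Ω} (hA : MeasurableSet A) {f : Ω → ℝ}
    (h : CondIndepFun m hm f (A.indicator (1 : Ω → ℝ)) P) (hf : Measurable f)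
    (hfi : Integrable f P) :
    P[A.indicator f|m] =ᵐ[P] P[f|m] * P[A.indicator 1|m] := by
  rw [← mul_indicator_one_eq_indicator]
  exact h.condExp_mul_ae_eq hf (measurable_one.indicator hA) hfi
    ((integrable_const 1).indicator hA)
    (by rw [mul_indicator_one_eq_indicator]; exact hfi.indicator hA)

theorem condExp_indicator_ae_eq_mul_of_stronglyMeasurable (hm : m ≤ mΩ) {A : Set Ω}
    (hA : MeasurableSet A) {h : Ω → ℝ} (hh : StronglyMeasurable[m] h) (hi : Integrable h P) :
    P[A.indicator h|m] =ᵐ[P] P[h|m] * P[A.indicator 1|m] := by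
  rw [← mul_indicator_one_eq_indicator, condExp_of_stronglyMeasurable hm hh hi]
  exact condExp_mul_of_stronglyMeasurable_left hh
    (by rw [mul_indicator_one_eq_indicator]; exact hi.indicator hA)
    ((integrable_const 1).indicator hA)

theorem integrable_inv_condExp_indicator_mul_indicator (hm : m ≤ mΩ) {A : Set Ω}
    (hA : MeasurableSet A) (hq : ∀ᵐ ω ∂P, 0 < P[A.indicator (1 : Ω → ℝ)|m] ω) {h : Ω → ℝ}
    (hh : Integrable h P) (habs : P[A.indicator (fun ω => |h ω|)|m] =ᵐ[P]
      P[fun ω => |h ω| | m] * P[A.indicator 1|m]) :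
    Integrable (P[A.indicator 1|m]⁻¹ * A.indicator h) P := by
  have hind_abs : (fun ω => |A.indicator h ω|) = A.indicator (fun ω => |h ω|) := by
    ext ω; by_cases hω : ω ∈ A <;> simp [hω]
  refine integrable_mul_of_integrable_abs_mul_condExp_abs hm stronglyMeasurable_condExp.inv₀
    (hh.indicator hA) ((integrable_condExp (m := m) (f := fun ω => |h ω|)).congr ?_)
  rw [hind_abs]
  filter_upwards [habs, hq] with ω habs_ω hq_ω
  rw [Pi.inv_apply, habs_ω, Pi.mul_apply, abs_inv, abs_of_pos hq_ω,
    mul_comm (P[fun ω => |h ω| | m] ω), inv_mul_cancel_left₀ hq_ω.ne']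

theorem integral_inv_condExp_indicator_mul_indicator (hm : m ≤ mΩ) {A : Set Ω}
    (hA : MeasurableSet A) (hq : ∀ᵐ ω ∂P, 0 < P[A.indicator (1 : Ω → ℝ)|m] ω) {h : Ω → ℝ}
    (hh : Integrable h P) (hfac : P[A.indicator h|m] =ᵐ[P] P[h|m] * P[A.indicator 1|m])
    (habs : P[A.indicator (fun ω => |h ω|)|m] =ᵐ[P]
      P[fun ω => |h ω| | m] * P[A.indicator 1|m]) :
    ∫ ω, (P[A.indicator 1|m]⁻¹ * A.indicator h : Ω → ℝ) ω ∂P = ∫ ω, h ω ∂P := by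
  have hpull : P[P[A.indicator 1|m]⁻¹ * A.indicator h|m] =ᵐ[P]
      P[A.indicator 1|m]⁻¹ * P[A.indicator h|m] :=
    condExp_mul_of_stronglyMeasurable_left stronglyMeasurable_condExp.inv₀
      (integrable_inv_condExp_indicator_mul_indicator hm hA hq hh habs) (hh.indicator hA)
  calc ∫ ω, (P[A.indicator 1|m]⁻¹ * A.indicator h : Ω → ℝ) ω ∂P
      = ∫ ω, P[P[A.indicator 1|m]⁻¹ * A.indicator h|m] ω ∂P := (integral_condExp hm).symm
    _ = ∫ ω, P[h|m] ω ∂P := by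
        refine integral_congr_ae ?_
        filter_upwards [hpull, hfac, hq] with ω hpull_ω hfac_ω hq_ω
        rw [hpull_ω, Pi.mul_apply, hfac_ω, Pi.mul_apply, Pi.inv_apply, mul_comm (P[h|m] ω),
          inv_mul_cancel_left₀ hq_ω.ne']
    _ = ∫ ω, h ω ∂P := integral_condExp hm

theorem integral_eq_integral_aipw [StandardBorelSpace Ω] (hm : m ≤ mΩ) {Y Ypo : Ω → ℝ}
    {A : Set Ω} (hA : MeasurableSet A) (hYpo : Measurable Ypo) (hYpo_int : Integrable Ypo P)
    (hindep : CondIndepFun m hm Ypo (A.indicator (1 : Ω → ℝ)) P) (hcons : ∀ ω ∈ A, Y ω = Ypo ω)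
    {ps μfn : Ω → ℝ} (hps : ps =ᵐ[P] P[A.indicator 1|m]) (hpos : ∀ᵐ ω ∂P, 0 < ps ω)
    (hμ : μfn =ᵐ[P] P[Y * A.indicator 1|m] / ps) :
    ∫ ω, Ypo ω ∂P = ∫ ω, μfn ω + (A.indicator 1 ω / ps ω) * (Y ω - μfn ω) ∂P := by
  set q := P[A.indicator (1 : Ω → ℝ)|m]
  set g := P[Ypo|m]
  have hq : ∀ᵐ ω ∂P, 0 < q ω := by
    filter_upwards [hps, hpos] with ω hps_ω hpos_ω
    rwa [← hps_ω]
  have hYpo_fac := hindep.condExp_indicator_ae_eq_mul hA hYpo hYpo_int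
  have hYpo_abs_fac := (hindep.comp measurable_abs measurable_id).condExp_indicator_ae_eq_mul hA
    hYpo.abs hYpo_int.abs
  have hg_sm : StronglyMeasurable[m] g := stronglyMeasurable_condExp
  have hg_fac := condExp_indicator_ae_eq_mul_of_stronglyMeasurable hm hA hg_sm integrable_condExp
  have hg_abs_fac := condExp_indicator_ae_eq_mul_of_stronglyMeasurable hm hA
    (continuous_abs.comp_stronglyMeasurable hg_sm) integrable_condExp.abs
  have hμg : μfn =ᵐ[P] g := by
    have hYA : Y * A.indicator 1 = A.indicator Ypo := by
      rw [mul_indicator_one_eq_indicator]; exact indicator_congr hcons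
    filter_upwards [hμ, hYpo_fac, hps, hq] with ω hμ_ω hYpo_ω hps_ω hq_ω
    rw [hμ_ω, Pi.div_apply, hYA, hYpo_ω, hps_ω, Pi.mul_apply, mul_div_cancel_right₀ _ hq_ω.ne']
  have hintegrand : (fun ω => μfn ω + (A.indicator 1 ω / ps ω) * (Y ω - μfn ω))
      =ᵐ[P] g + (q⁻¹ * A.indicator Ypo - q⁻¹ * A.indicator g) := by
    filter_upwards [hμg, hps] with ω hμ_ω hps_ω
    by_cases hω : ω ∈ A
    · simp [hω, hμ_ω, hps_ω, hcons ω hω, div_eq_inv_mul, mul_sub]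
    · simp [hω, hμ_ω]
  have hYpo_w := integrable_inv_condExp_indicator_mul_indicator hm hA hq hYpo_int hYpo_abs_fac
  have hg_w := integrable_inv_condExp_indicator_mul_indicator hm hA hq integrable_condExp
    hg_abs_fac
  rw [integral_congr_ae hintegrand, integral_add' integrable_condExp (hYpo_w.sub hg_w),
    integral_sub' hYpo_w hg_w,
    integral_inv_condExp_indicator_mul_indicator hm hA hq hYpo_int hYpo_fac hYpo_abs_fac,
    integral_inv_condExp_indicator_mul_indicator hm hA hq integrable_condExp hg_fac hg_abs_fac]
  ring
end

theorem stmt_3_general {Ω : Type*} [MeasurableSpace Ω] [StandardBorelSpace Ω]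
    (P : Measure Ω) [IsProbabilityMeasure P]
    (Y Ypo : Ω → ℝ) (D : Ω → ℕ) (Z : Ω → ℤ) (X : Ω → ℝ) (d : ℕ) (z : ℤ)
    (hD : Measurable D) (hZ : Measurable Z) (hX : Measurable X) (hYpoMeas : Measurable Ypo)
    (hYpoInt : Integrable Ypo P)
    (hcons : ∀ ω, D ω = d → Z ω = z → Y ω = Ypo ω)
    (hcondindep : CondIndepFun (MeasurableSpace.comap X inferInstance) hX.comap_le
      Ypo (fun ω => (D ω, Z ω)) P)
    -- the true propensity score p(d,z | X)
    (ps : Ω → ℝ)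
    (hps : ps =ᵐ[P] P[({ω' | D ω' = d ∧ Z ω' = z}).indicator (fun _ => (1 : ℝ))
            | MeasurableSpace.comap X inferInstance])
    (hpos : ∀ᵐ ω ∂P, 0 < ps ω)
    -- the true conditional mean outcome μ(d,z,X) = E[Y | D = d, Z = z, X]
    (μfn : Ω → ℝ)
    (hμ : μfn =ᵐ[P] fun ω =>
      (P[fun ω' => Y ω' * ({ω'' | D ω'' = d ∧ Z ω'' = z}).indicator (fun _ => (1 : ℝ)) ω'
          | MeasurableSpace.comap X inferInstance]) ω / ps ω) :
    ∫ ω, Ypo ω ∂P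
      = ∫ ω, μfn ω
          + (({ω' | D ω' = d ∧ Z ω' = z}).indicator (fun _ => (1 : ℝ)) ω / ps ω)
            * (Y ω - μfn ω) ∂P := by
  have hA_eq : (fun ω => (D ω, Z ω)) ⁻¹' {(d, z)} = {ω' | D ω' = d ∧ Z ω' = z} := by
    ext ω; simp
  have hindep : CondIndepFun (MeasurableSpace.comap X inferInstance) hX.comap_le Ypo
      ({ω' | D ω' = d ∧ Z ω' = z}.indicator (1 : Ω → ℝ)) P := by
    rw [← hA_eq]
    exact hcondindep.comp measurable_id (measurable_one.indicator (measurableSet_singleton _))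
  exact integral_eq_integral_aipw hX.comap_le ((hD (measurableSet_singleton d)).inter
    (hZ (measurableSet_singleton z))) hYpoMeas hYpoInt hindep (fun ω hω => hcons ω hω.1 hω.2)
    hps hpos hμ

/-- Doubly robust (AIPW) identification of the mean potential outcome `E[Y(d,z)]`
under interference captured by an exposure `Z`: `μ` is the true conditional mean
outcome given `(D = d, Z = z, X)` and `p` the true joint propensity score. -/
theorem stmt_3 {Ω : Type*} [MeasurableSpace Ω] [StandardBorelSpace Ω]
    (P : Measure Ω) [IsProbabilityMeasure P]
    (Y Ypo : Ω → ℝ) (D : Ω → ℕ) (Z : Ω → ℤ) (X : Ω → ℝ) (d : ℕ) (z : ℤ)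
    (hD : Measurable D) (hZ : Measurable Z) (hX : Measurable X) (hYpoMeas : Measurable Ypo)
    (hDbin : ∀ ω, D ω = 0 ∨ D ω = 1)
    (hYint : Integrable Y P) (hYpoInt : Integrable Ypo P)
    (hcons : ∀ ω, D ω = d → Z ω = z → Y ω = Ypo ω)
    (hcondindep : CondIndepFun (MeasurableSpace.comap X inferInstance) hX.comap_le
      Ypo (fun ω => (D ω, Z ω)) P)
    -- the true propensity score p(d,z | X)
    (ps : Ω → ℝ)
    (hps : ps =ᵐ[P] P[({ω' | D ω' = d ∧ Z ω' = z}).indicator (fun _ => (1 : ℝ))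
            | MeasurableSpace.comap X inferInstance])
    (hpos : ∀ᵐ ω ∂P, 0 < ps ω)
    -- the true conditional mean outcome μ(d,z,X) = E[Y | D = d, Z = z, X]
    (μfn : Ω → ℝ)
    (hμ : μfn =ᵐ[P] fun ω =>
      (P[fun ω' => Y ω' * ({ω'' | D ω'' = d ∧ Z ω'' = z}).indicator (fun _ => (1 : ℝ)) ω'
          | MeasurableSpace.comap X inferInstance]) ω / ps ω) :
    ∫ ω, Ypo ω ∂P
      = ∫ ω, μfn ω
          + (({ω' | D ω' = d ∧ Z ω' = z}).indicator (fun _ => (1 : ℝ)) ω / ps ω)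
            * (Y ω - μfn ω) ∂P :=
  stmt_3_general P Y Ypo D Z X d z hD hZ hX hYpoMeas hYpoInt hcons hcondindep ps hps hpos μfn hμ
end

section
/- Let Y be integrable, D ∈ {0,1}, Z discrete, X a random variable, with true conditional mean μ(d,z,X) = E[Y | D=d, Z=z, X] and true propensity p(d,z|X) = P(D=d, Z=z | X) > 0 a.s. Let m̃(X) be any measurable bounded function (a possibly misspecified outcome model). Then E[ m̃(X) + (1{D=d,Z=z}/p(d,z|X)) · (Y − m̃(X)) ] = E[ μ(d,z,X) + (1{D=d,Z=z}/p(d,z|X)) · (Y − μ(d,z,X)) ]; that is, the AIPW functional is invariant to misspecification of the outcome model when the propensity score is correct. -/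
/-!
Write `q = W / E[W | m]` for the inverse propensity weight. For an `m`-measurable outcome model
`g`, the AIPW score is `g + q (Y - g) = g (1 - q) + q Y`, and `E[q | m] = 1`, so when `g` is
integrable the first term integrates to zero and the score integrates to `∫ q Y`, whatever `g` is.
The true regression `E[Y W | m] / E[W | m]` need not be integrable; but on each `m`-set where `g`
is bounded the same computation can be done conditionally, so any integrable score has the true
regression as its conditional expectation. Hence if the true regression is not integrable, no
score is, and both integrals are `0` by the Bochner convention.
-/

open MeasureTheory ProbabilityTheory Set Filter

theorem integral_add_of_integral_eq_zero {Ω E : Type*} [MeasurableSpace Ω] [NormedAddCommGroup E]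
    [NormedSpace ℝ E] {P : Measure Ω} {u v : Ω → E} (hu : Integrable u P)
    (hu0 : ∫ ω, u ω ∂P = 0) :
    ∫ ω, u ω + v ω ∂P = ∫ ω, v ω ∂P := by
  by_cases hv : Integrable v P
  · rw [integral_add hu hv, hu0, zero_add]
  · rw [integral_undef hv]
    exact integral_undef ((integrable_add_iff_integrable_right hu).not.2 hv)

theorem condExp_ae_eq_of_forall_indicator {Ω E : Type*} {m m0 : MeasurableSpace Ω}
    [NormedAddCommGroup E] [NormedSpace ℝ E] [CompleteSpace E] {P : Measure[m0] Ω} {V g : Ω → E}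
    (hV : Integrable V P) {A : ℕ → Set Ω} (hA : ∀ n, MeasurableSet[m] (A n))
    (hcover : ∀ ω, ∃ n, ω ∈ A n) (h : ∀ n, P[(A n).indicator V | m] =ᵐ[P] (A n).indicator g) :
    P[V | m] =ᵐ[P] g := by
  have hloc : ∀ᵐ ω ∂P, ∀ n, (A n).indicator (P[V | m]) ω = (A n).indicator g ω :=
    ae_all_iff.2 fun n => (condExp_indicator hV (hA n)).symm.trans (h n)
  filter_upwards [hloc] with ω hω
  obtain ⟨n, hn⟩ := hcover ω
  simpa [indicator_of_mem hn] using hω n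

/-- `P[W|m]` is the propensity score `p(d, z | X)` when `W = 1{D = d, Z = z}`, `m = σ(X)`. -/
noncomputable def ipWeight {Ω : Type*} {m0 : MeasurableSpace Ω} (P : Measure[m0] Ω)
    (m : MeasurableSpace Ω) (W : Ω → ℝ) : Ω → ℝ :=
  fun ω => W ω / P[W|m] ω

/-- For `W = 1{D = d, Z = z}` and `m = σ(X)` this is `E[Y | D = d, Z = z, X]`. -/
noncomputable def weightedCondExp {Ω : Type*} {m0 : MeasurableSpace Ω} (P : Measure[m0] Ω)
    (m : MeasurableSpace Ω) (W Y : Ω → ℝ) : Ω → ℝ :=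
  fun ω => P[fun ω => Y ω * W ω | m] ω / P[W|m] ω

noncomputable def aipwScore {Ω : Type*} {m0 : MeasurableSpace Ω} (P : Measure[m0] Ω)
    (m : MeasurableSpace Ω) (W Y g : Ω → ℝ) : Ω → ℝ :=
  fun ω => g ω + ipWeight P m W ω * (Y ω - g ω)

section InverseWeighting

variable {Ω : Type*} {m m0 : MeasurableSpace Ω} {P : Measure[m0] Ω} [IsFiniteMeasure P]
  {W Y g : Ω → ℝ}

theorem lintegral_ofReal_condExp_mul (hm : m ≤ m0) (hW0 : 0 ≤ᵐ[P] W) (hW : Integrable W P)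
    {f : Ω → ENNReal} (hf : Measurable[m] f) :
    ∫⁻ ω, ENNReal.ofReal (P[W|m] ω) * f ω ∂P = ∫⁻ ω, ENNReal.ofReal (W ω) * f ω ∂P := by
  have htrim : (P.withDensity fun ω => ENNReal.ofReal (P[W|m] ω)).trim hm
      = (P.withDensity fun ω => ENNReal.ofReal (W ω)).trim hm := by
    refine @Measure.ext _ m _ _ fun s hs => ?_
    rw [trim_measurableSet_eq hm hs, trim_measurableSet_eq hm hs, withDensity_apply _ (hm s hs),
      withDensity_apply _ (hm s hs), ← ofReal_integral_eq_lintegral_ofReal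
        integrable_condExp.integrableOn (ae_restrict_of_ae (condExp_nonneg hW0)),
      ← ofReal_integral_eq_lintegral_ofReal hW.integrableOn (ae_restrict_of_ae hW0),
      setIntegral_condExp hm hW hs]
  have key := congrArg (fun ν => ∫⁻ ω, f ω ∂ν) htrim
  simp only [lintegral_trim hm hf] at key
  rwa [lintegral_withDensity_eq_lintegral_mul₀ (by fun_prop) (hf.mono hm le_rfl).aemeasurable,
    lintegral_withDensity_eq_lintegral_mul₀ (by fun_prop) (hf.mono hm le_rfl).aemeasurable] at key

theorem integrable_mul_ipWeight (hm : m ≤ m0) (hW0 : 0 ≤ᵐ[P] W) (hW : Integrable W P)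
    (hpos : ∀ᵐ ω ∂P, 0 < P[W|m] ω) (hg : StronglyMeasurable[m] g) (hgi : Integrable g P) :
    Integrable (fun ω => g ω * ipWeight P m W ω) P := by
  have hp_sm : StronglyMeasurable[m] (P[W|m]) := stronglyMeasurable_condExp
  have hp : Measurable[m] (P[W|m]) := hp_sm.measurable
  have hg_meas : Measurable[m] g := hg.measurable
  refine ⟨hgi.aestronglyMeasurable.mul (hW.aestronglyMeasurable.div₀
    (hp_sm.mono hm).aestronglyMeasurable), ?_⟩
  have hpoint : ∀ᵐ ω ∂P, ‖g ω * ipWeight P m W ω‖ₑ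
      = ENNReal.ofReal (W ω) * (‖g ω‖ₑ / ENNReal.ofReal (P[W|m] ω)) := by
    filter_upwards [hW0, hpos] with ω hWω hp
    rw [ipWeight, enorm_mul, Real.enorm_eq_ofReal (div_nonneg hWω hp.le),
      ENNReal.ofReal_div_of_pos hp, div_eq_mul_inv, div_eq_mul_inv]
    ring
  have hcancel : ∀ᵐ ω ∂P, ENNReal.ofReal (P[W|m] ω) * (‖g ω‖ₑ / ENNReal.ofReal (P[W|m] ω))
      = ‖g ω‖ₑ := by
    filter_upwards [hpos] with ω hp
    exact ENNReal.mul_div_cancel (ENNReal.ofReal_pos.2 hp).ne' ENNReal.ofReal_ne_top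
  have hf : Measurable[m] fun ω => ‖g ω‖ₑ / ENNReal.ofReal (P[W|m] ω) :=
    (measurable_enorm.comp hg_meas).div hp.ennreal_ofReal
  rw [HasFiniteIntegral, lintegral_congr_ae hpoint, ← lintegral_ofReal_condExp_mul hm hW0 hW hf,
    lintegral_congr_ae hcancel]
  exact hgi.hasFiniteIntegral

theorem condExp_mul_ipWeight (hm : m ≤ m0) (hW0 : 0 ≤ᵐ[P] W) (hW : Integrable W P)
    (hpos : ∀ᵐ ω ∂P, 0 < P[W|m] ω) (hg : StronglyMeasurable[m] g) (hgi : Integrable g P) :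
    P[fun ω => g ω * ipWeight P m W ω | m] =ᵐ[P] g := by
  have hp : Measurable[m] (P[W|m]) := stronglyMeasurable_condExp.measurable
  have hg_meas : Measurable[m] g := hg.measurable
  have hgp : StronglyMeasurable[m] fun ω => g ω / P[W|m] ω :=
    (hg_meas.div hp).stronglyMeasurable
  have hprod : (fun ω => g ω * ipWeight P m W ω) = (fun ω => g ω / P[W|m] ω) * W := by
    ext ω
    simp only [ipWeight, Pi.mul_apply]
    ring
  have hint := integrable_mul_ipWeight hm hW0 hW hpos hg hgi
  rw [hprod] at hint ⊢
  filter_upwards [condExp_mul_of_stronglyMeasurable_left hgp hint hW, hpos] with ω hω hp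
  rw [hω, Pi.mul_apply, div_mul_cancel₀ _ hp.ne']

theorem integral_mul_ipWeight (hm : m ≤ m0) (hW0 : 0 ≤ᵐ[P] W) (hW : Integrable W P)
    (hpos : ∀ᵐ ω ∂P, 0 < P[W|m] ω) (hg : StronglyMeasurable[m] g) (hgi : Integrable g P) :
    ∫ ω, g ω * ipWeight P m W ω ∂P = ∫ ω, g ω ∂P := by
  rw [← integral_condExp hm, integral_congr_ae (condExp_mul_ipWeight hm hW0 hW hpos hg hgi)]

theorem integral_aipwScore_of_integrable (hm : m ≤ m0) (hW0 : 0 ≤ᵐ[P] W) (hW : Integrable W P)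
    (hpos : ∀ᵐ ω ∂P, 0 < P[W|m] ω) (hg : StronglyMeasurable[m] g) (hgi : Integrable g P) :
    ∫ ω, aipwScore P m W Y g ω ∂P = ∫ ω, ipWeight P m W ω * Y ω ∂P := by
  have hgq_int := integrable_mul_ipWeight hm hW0 hW hpos hg hgi
  calc ∫ ω, aipwScore P m W Y g ω ∂P
      = ∫ ω, (g ω - g ω * ipWeight P m W ω) + ipWeight P m W ω * Y ω ∂P := by
        congr 1; ext ω; simp only [aipwScore]; ring
    _ = ∫ ω, ipWeight P m W ω * Y ω ∂P := by
        refine integral_add_of_integral_eq_zero (hgi.sub hgq_int) ?_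
        rw [integral_sub hgi hgq_int, integral_mul_ipWeight hm hW0 hW hpos hg hgi, sub_self]

theorem condExp_aipwScore (hm : m ≤ m0) (hW0 : 0 ≤ᵐ[P] W) (hW : Integrable W P)
    (hpos : ∀ᵐ ω ∂P, 0 < P[W|m] ω) (hYW : Integrable (fun ω => Y ω * W ω) P)
    (hg : StronglyMeasurable[m] g) (hS : Integrable (aipwScore P m W Y g) P) :
    P[aipwScore P m W Y g | m] =ᵐ[P] weightedCondExp P m W Y := by
  have hp_sm : StronglyMeasurable[m] (P[W|m]) := stronglyMeasurable_condExp
  have hg_meas : Measurable[m] g := hg.measurable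
  have hA_meas : ∀ n : ℕ, MeasurableSet[m] {ω | |g ω| ≤ n} := fun n =>
    (measurable_abs.comp hg_meas) measurableSet_Iic
  refine condExp_ae_eq_of_forall_indicator hS hA_meas
    (fun ω => ⟨⌈|g ω|⌉₊, Nat.le_ceil (|g ω|)⟩) fun n => ?_
  set A : Set Ω := {ω | |g ω| ≤ n}
  set φ : Ω → ℝ := A.indicator g
  set ψ : Ω → ℝ := A.indicator fun ω => (P[W|m] ω)⁻¹
  have hφ_sm : StronglyMeasurable[m] φ := hg.indicator (hA_meas n)
  have hψ_sm : StronglyMeasurable[m] ψ :=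
    (hp_sm.measurable.inv.indicator (hA_meas n)).stronglyMeasurable
  have hφ_int : Integrable φ P := by
    refine Integrable.of_bound (hφ_sm.mono hm).aestronglyMeasurable n (ae_of_all _ fun ω => ?_)
    by_cases hω : ω ∈ A
    · rw [Real.norm_eq_abs, show φ ω = g ω from indicator_of_mem hω g]
      exact hω
    · simp [φ, indicator_of_notMem hω]
  have hφq_int := integrable_mul_ipWeight hm hW0 hW hpos hφ_sm hφ_int
  -- `φ - φ q` has conditional mean zero since `φ` is bounded
  have hdecomp : A.indicator (aipwScore P m W Y g)
      = (φ - fun ω => φ ω * ipWeight P m W ω) + ψ * fun ω => Y ω * W ω := by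
    ext ω
    by_cases hω : ω ∈ A
    · simp only [φ, ψ, aipwScore, ipWeight, indicator_of_mem hω, Pi.add_apply, Pi.sub_apply,
        Pi.mul_apply]
      ring
    · simp [φ, ψ, indicator_of_notMem hω]
  have hψYW_int : Integrable (ψ * fun ω => Y ω * W ω) P := by
    refine (integrable_add_iff_integrable_right (hφ_int.sub hφq_int)).1 ?_
    rw [← hdecomp]
    exact hS.indicator (hm _ (hA_meas n))
  rw [hdecomp]
  filter_upwards [condExp_add (hφ_int.sub hφq_int) hψYW_int m, condExp_sub hφ_int hφq_int m,
    condExp_mul_ipWeight hm hW0 hW hpos hφ_sm hφ_int,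
    condExp_mul_of_stronglyMeasurable_left hψ_sm hψYW_int hYW] with ω hadd hsub hweight hpull
  rw [hadd, Pi.add_apply, hsub, Pi.sub_apply, condExp_of_stronglyMeasurable hm hφ_sm hφ_int,
    hweight, hpull, sub_self, zero_add, Pi.mul_apply]
  by_cases hω : ω ∈ A
  · simp only [ψ, weightedCondExp, indicator_of_mem hω]
    ring
  · simp [ψ, indicator_of_notMem hω]

theorem integral_aipwScore_eq (hm : m ≤ m0) (hW0 : 0 ≤ᵐ[P] W) (hW : Integrable W P)
    (hpos : ∀ᵐ ω ∂P, 0 < P[W|m] ω) (hYW : Integrable (fun ω => Y ω * W ω) P)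
    (hg : StronglyMeasurable[m] g) (hgi : Integrable g P) :
    ∫ ω, aipwScore P m W Y g ω ∂P = ∫ ω, aipwScore P m W Y (weightedCondExp P m W Y) ω ∂P := by
  have hν : Measurable[m] (P[fun ω => Y ω * W ω | m]) := stronglyMeasurable_condExp.measurable
  have hp : Measurable[m] (P[W|m]) := stronglyMeasurable_condExp.measurable
  have hμ_sm : StronglyMeasurable[m] (weightedCondExp P m W Y) := (hν.div hp).stronglyMeasurable
  by_cases hμ : Integrable (weightedCondExp P m W Y) P
  · rw [integral_aipwScore_of_integrable hm hW0 hW hpos hg hgi,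
      integral_aipwScore_of_integrable hm hW0 hW hpos hμ_sm hμ]
  · have hS : ∀ h : Ω → ℝ, StronglyMeasurable[m] h → ¬Integrable (aipwScore P m W Y h) P :=
      fun h hh hint => hμ (integrable_condExp.congr (condExp_aipwScore hm hW0 hW hpos hYW hh hint))
    rw [integral_undef (hS g hg), integral_undef (hS _ hμ_sm)]

end InverseWeighting

theorem stmt_4_general {Ω : Type*} [MeasurableSpace Ω] (P : Measure Ω) [IsProbabilityMeasure P]
    (Y : Ω → ℝ) (D : Ω → ℕ) (Z : Ω → ℤ) (X : Ω → ℝ) (d : ℕ) (z : ℤ)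
    (hD : Measurable D) (hZ : Measurable Z) (hX : Measurable X)
    (hYint : Integrable Y P)
    -- the true propensity score p(d,z | X)
    (ps : Ω → ℝ)
    (hps : ps =ᵐ[P] P[({ω' | D ω' = d ∧ Z ω' = z}).indicator (fun _ => (1 : ℝ))
            | MeasurableSpace.comap X inferInstance])
    (hpos : ∀ᵐ ω ∂P, 0 < ps ω)
    -- the true conditional mean outcome μ(d,z,X) = E[Y | D = d, Z = z, X]
    (μfn : Ω → ℝ)
    (hμ : μfn =ᵐ[P] fun ω =>
      (P[fun ω' => Y ω' * ({ω'' | D ω'' = d ∧ Z ω'' = z}).indicator (fun _ => (1 : ℝ)) ω'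
          | MeasurableSpace.comap X inferInstance]) ω / ps ω)
    -- an arbitrary (possibly misspecified) bounded measurable outcome model m̃(X)
    (mtil : ℝ → ℝ) (hmtil : Measurable mtil) (C : ℝ) (hbd : ∀ x, |mtil x| ≤ C) :
    ∫ ω, mtil (X ω)
        + (({ω' | D ω' = d ∧ Z ω' = z}).indicator (fun _ => (1 : ℝ)) ω / ps ω)
          * (Y ω - mtil (X ω)) ∂P
      = ∫ ω, μfn ω
          + (({ω' | D ω' = d ∧ Z ω' = z}).indicator (fun _ => (1 : ℝ)) ω / ps ω)
            * (Y ω - μfn ω) ∂P := by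
  set I : Ω → ℝ := ({ω' | D ω' = d ∧ Z ω' = z}).indicator fun _ => (1 : ℝ)
  have hs : MeasurableSet {ω' | D ω' = d ∧ Z ω' = z} :=
    (hD (measurableSet_singleton d)).inter (hZ (measurableSet_singleton z))
  have hI_int : Integrable I P := (integrable_const 1).indicator hs
  have hI0 : 0 ≤ᵐ[P] I := ae_of_all _ (indicator_nonneg fun _ _ => zero_le_one)
  have hYI_int : Integrable (fun ω => Y ω * I ω) P :=
    hYint.mul_bdd hI_int.aestronglyMeasurable (c := 1)
      (ae_of_all _ fun ω => (norm_indicator_le_norm_self _ _).trans (by simp))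
  have hppos : ∀ᵐ ω ∂P, 0 < P[I|MeasurableSpace.comap X inferInstance] ω := by
    filter_upwards [hps, hpos] with ω h h'
    rwa [← h]
  have hmX : Measurable[MeasurableSpace.comap X inferInstance] fun ω => mtil (X ω) :=
    hmtil.comp (comap_measurable X)
  have hmX_int : Integrable (fun ω => mtil (X ω)) P :=
    Integrable.of_bound (hmX.mono hX.comap_le le_rfl).aestronglyMeasurable C
      (ae_of_all _ fun ω => (Real.norm_eq_abs _).trans_le (hbd _))
  refine (integral_congr_ae ?_).trans ((integral_aipwScore_eq hX.comap_le hI0 hI_int hppos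
    hYI_int hmX.stronglyMeasurable hmX_int).trans (integral_congr_ae ?_))
  · filter_upwards [hps] with ω h
    rw [h]
    rfl
  · filter_upwards [hps, hμ] with ω h h'
    rw [h', h]
    rfl

/-- Double robustness (propensity-score side): with the true propensity score, the AIPW
functional is invariant to misspecification of the outcome regression model. -/
theorem stmt_4 {Ω : Type*} [MeasurableSpace Ω] (P : Measure Ω) [IsProbabilityMeasure P]
    (Y : Ω → ℝ) (D : Ω → ℕ) (Z : Ω → ℤ) (X : Ω → ℝ) (d : ℕ) (z : ℤ)
    (hD : Measurable D) (hZ : Measurable Z) (hX : Measurable X)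
    (hDbin : ∀ ω, D ω = 0 ∨ D ω = 1)
    (hYint : Integrable Y P)
    -- the true propensity score p(d,z | X)
    (ps : Ω → ℝ)
    (hps : ps =ᵐ[P] P[({ω' | D ω' = d ∧ Z ω' = z}).indicator (fun _ => (1 : ℝ))
            | MeasurableSpace.comap X inferInstance])
    (hpos : ∀ᵐ ω ∂P, 0 < ps ω)
    -- the true conditional mean outcome μ(d,z,X) = E[Y | D = d, Z = z, X]
    (μfn : Ω → ℝ)
    (hμ : μfn =ᵐ[P] fun ω =>
      (P[fun ω' => Y ω' * ({ω'' | D ω'' = d ∧ Z ω'' = z}).indicator (fun _ => (1 : ℝ)) ω'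
          | MeasurableSpace.comap X inferInstance]) ω / ps ω)
    -- an arbitrary (possibly misspecified) bounded measurable outcome model m̃(X)
    (mtil : ℝ → ℝ) (hmtil : Measurable mtil) (C : ℝ) (hbd : ∀ x, |mtil x| ≤ C) :
    ∫ ω, mtil (X ω)
        + (({ω' | D ω' = d ∧ Z ω' = z}).indicator (fun _ => (1 : ℝ)) ω / ps ω)
          * (Y ω - mtil (X ω)) ∂P
      = ∫ ω, μfn ω
          + (({ω' | D ω' = d ∧ Z ω' = z}).indicator (fun _ => (1 : ℝ)) ω / ps ω)
            * (Y ω - μfn ω) ∂P :=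
  stmt_4_general P Y D Z X d z hD hZ hX hYint ps hps hpos μfn hμ mtil hmtil C hbd
end

section
/- Let Y be integrable, Ż discrete, and Z̃ a random variable with a measurable set B such that p(Ż) := P(Z̃ ∈ B | Ż) ∈ (ε, 1−ε) almost surely. Define μ(Ż) = E[Y | Ż, Z̃ ∈ B] and ν(Ż) = E[Y | Ż, Z̃ ∉ B]. Then E[ (Y − μ(Ż)) · 1{Z̃ ∈ B} / p(Ż) − (Y − ν(Ż)) · 1{Z̃ ∉ B} / (1 − p(Ż)) ] = 0. -/
/-!
Conditioning on the sub-σ-algebra `m` generated by `Ż`, the weight `1 / p` is `m`-measurable and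
bounded, so it factors out of the conditional expectation of the weighted residual
`(Y - μ) · 1{Z̃ ∈ B}`. That conditional expectation is `E[Y 1_B | m] - μ · p = 0`, by the
very definition of `μ`. The same computation applies to the complementary cell, whose conditional
probability is `1 - p`.
-/

open MeasureTheory Set

section WeightedResidual

variable {Ω : Type*} {m mΩ : MeasurableSpace Ω} {P : Measure Ω} {Y I : Ω → ℝ} {C ε : ℝ}

/-- For an indicator `I`, the conditional mean of `Y` on the cell `{I = 1}`: the paper's `μ`
and `ν`. -/
noncomputable def weightedCondMean (P : Measure Ω) (m : MeasurableSpace Ω) (I Y : Ω → ℝ) :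
    Ω → ℝ :=
  fun ω => P[fun ω' => Y ω' * I ω'|m] ω / P[I|m] ω

lemma stronglyMeasurable_weightedCondMean :
    StronglyMeasurable[m] (weightedCondMean P m I Y) :=
  (stronglyMeasurable_condExp.measurable.div
    stronglyMeasurable_condExp.measurable).stronglyMeasurable

lemma stronglyMeasurable_inv_condExp : StronglyMeasurable[m] fun ω => (P[I|m] ω)⁻¹ :=
  stronglyMeasurable_condExp.measurable.inv.stronglyMeasurable

lemma ae_norm_inv_le_of_ae_le (hε : 0 < ε) {q : Ω → ℝ} (hq : ∀ᵐ ω ∂P, ε ≤ q ω) :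
    ∀ᵐ ω ∂P, ‖(q ω)⁻¹‖ ≤ ε⁻¹ := by
  filter_upwards [hq] with ω hqω
  rw [norm_inv, Real.norm_of_nonneg (hε.trans_le hqω).le]
  exact inv_anti₀ hε hqω

lemma ipw_residual_ae_eq {p μ : Ω → ℝ} (hp : p =ᵐ[P] P[I|m])
    (hμ : μ =ᵐ[P] fun ω => P[fun ω' => Y ω' * I ω'|m] ω / p ω) :
    (fun ω => (Y ω - μ ω) * I ω / p ω) =ᵐ[P]
      fun ω => (P[I|m] ω)⁻¹ * ((Y ω - weightedCondMean P m I Y ω) * I ω) := by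
  filter_upwards [hp, hμ] with ω hpω hμω
  rw [hμω, hpω, weightedCondMean, div_eq_inv_mul]

lemma integrable_weightedCondMean (hm : m ≤ mΩ) (hε : 0 < ε)
    (hq : ∀ᵐ ω ∂P, ε ≤ P[I|m] ω) :
    Integrable (weightedCondMean P m I Y) P := by
  refine ((integrable_condExp (m := m) (f := fun ω => Y ω * I ω)).bdd_mul
    (stronglyMeasurable_inv_condExp.mono hm).aestronglyMeasurable
      (ae_norm_inv_le_of_ae_le hε hq)).congr (ae_of_all _ fun ω => ?_)
  simp only [weightedCondMean, div_eq_inv_mul]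

lemma integrable_sub_weightedCondMean_mul (hm : m ≤ mΩ) (hY : Integrable Y P)
    (hI : AEStronglyMeasurable I P) (hI_bd : ∀ᵐ ω ∂P, ‖I ω‖ ≤ C) (hε : 0 < ε)
    (hq : ∀ᵐ ω ∂P, ε ≤ P[I|m] ω) :
    Integrable (fun ω => (Y ω - weightedCondMean P m I Y ω) * I ω) P :=
  (hY.sub (integrable_weightedCondMean hm hε hq)).mul_bdd hI hI_bd

lemma integrable_ipw_residual (hm : m ≤ mΩ) (hY : Integrable Y P)
    (hI : AEStronglyMeasurable I P) (hI_bd : ∀ᵐ ω ∂P, ‖I ω‖ ≤ C) (hε : 0 < ε)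
    {p μ : Ω → ℝ} (hp : p =ᵐ[P] P[I|m]) (hpε : ∀ᵐ ω ∂P, ε ≤ p ω)
    (hμ : μ =ᵐ[P] fun ω => P[fun ω' => Y ω' * I ω'|m] ω / p ω) :
    Integrable (fun ω => (Y ω - μ ω) * I ω / p ω) P := by
  have hq : ∀ᵐ ω ∂P, ε ≤ P[I|m] ω := by
    filter_upwards [hp, hpε] with ω hpω hεω using hpω ▸ hεω
  exact ((integrable_sub_weightedCondMean_mul hm hY hI hI_bd hε hq).bdd_mul
    (stronglyMeasurable_inv_condExp.mono hm).aestronglyMeasurable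
    (ae_norm_inv_le_of_ae_le hε hq)).congr (ipw_residual_ae_eq hp hμ).symm

variable [IsFiniteMeasure P]

lemma condExp_sub_weightedCondMean_mul_ae_eq_zero (hm : m ≤ mΩ) (hY : Integrable Y P)
    (hI : AEStronglyMeasurable I P) (hI_bd : ∀ᵐ ω ∂P, ‖I ω‖ ≤ C) (hε : 0 < ε)
    (hq : ∀ᵐ ω ∂P, ε ≤ P[I|m] ω) :
    P[fun ω => (Y ω - weightedCondMean P m I Y ω) * I ω|m] =ᵐ[P] 0 := by
  set mean := weightedCondMean P m I Y
  have hYI : Integrable (fun ω => Y ω * I ω) P := hY.mul_bdd hI hI_bd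
  have hmeanI : Integrable (mean * I) P :=
    (integrable_weightedCondMean hm hε hq).mul_bdd hI hI_bd
  have hI_int : Integrable I P := (integrable_const C).mono' hI hI_bd
  have h_split : P[fun ω => (Y ω - mean ω) * I ω|m] =ᵐ[P]
      P[fun ω => Y ω * I ω|m] - P[mean * I|m] := by
    have h_fun : (fun ω => (Y ω - mean ω) * I ω) = (fun ω => Y ω * I ω) - mean * I :=
      funext fun ω => sub_mul _ _ _
    rw [h_fun]
    exact condExp_sub hYI hmeanI m
  have h_pull : P[mean * I|m] =ᵐ[P] mean * P[I|m] :=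
    condExp_mul_of_stronglyMeasurable_left stronglyMeasurable_weightedCondMean hmeanI hI_int
  filter_upwards [h_split, h_pull, hq] with ω h_split h_pull hqω
  have hq0 : P[I|m] ω ≠ 0 := (hε.trans_le hqω).ne'
  rw [h_split, Pi.sub_apply, h_pull, Pi.mul_apply, Pi.zero_apply]
  exact sub_eq_zero.mpr (div_mul_cancel₀ _ hq0).symm

lemma integral_ipw_residual_eq_zero (hm : m ≤ mΩ) (hY : Integrable Y P)
    (hI : AEStronglyMeasurable I P) (hI_bd : ∀ᵐ ω ∂P, ‖I ω‖ ≤ C) (hε : 0 < ε)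
    {p μ : Ω → ℝ} (hp : p =ᵐ[P] P[I|m]) (hpε : ∀ᵐ ω ∂P, ε ≤ p ω)
    (hμ : μ =ᵐ[P] fun ω => P[fun ω' => Y ω' * I ω'|m] ω / p ω) :
    ∫ ω, (Y ω - μ ω) * I ω / p ω ∂P = 0 := by
  have hq : ∀ᵐ ω ∂P, ε ≤ P[I|m] ω := by
    filter_upwards [hp, hpε] with ω hpω hεω using hpω ▸ hεω
  have h_factor := condExp_stronglyMeasurable_mul_of_bound hm stronglyMeasurable_inv_condExp
    (integrable_sub_weightedCondMean_mul hm hY hI hI_bd hε hq) ε⁻¹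
    (ae_norm_inv_le_of_ae_le hε hq)
  have h_centred := condExp_sub_weightedCondMean_mul_ae_eq_zero hm hY hI hI_bd hε hq
  calc ∫ ω, (Y ω - μ ω) * I ω / p ω ∂P
      = ∫ ω, (P[I|m] ω)⁻¹ * ((Y ω - weightedCondMean P m I Y ω) * I ω) ∂P :=
        integral_congr_ae (ipw_residual_ae_eq hp hμ)
    _ = ∫ ω, P[fun ω => (P[I|m] ω)⁻¹ * ((Y ω - weightedCondMean P m I Y ω) * I ω)|m] ω
          ∂P :=
        (integral_condExp hm).symm
    _ = ∫ _, (0 : ℝ) ∂P :=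
        integral_congr_ae (h_factor.trans (h_centred.mono fun ω hω => by simp [hω]))
    _ = 0 := integral_zero Ω ℝ

end WeightedResidual

lemma condExp_indicator_compl_ae_eq {Ω : Type*} {m mΩ : MeasurableSpace Ω} {P : Measure Ω}
    [IsFiniteMeasure P] (hm : m ≤ mΩ) {s : Set Ω} (hs : MeasurableSet s) :
    P[sᶜ.indicator fun _ => (1 : ℝ)|m] =ᵐ[P]
      fun ω => 1 - P[s.indicator fun _ => (1 : ℝ)|m] ω := by
  rw [indicator_compl]
  filter_upwards [condExp_sub (integrable_const (1 : ℝ)) ((integrable_const 1).indicator hs) m]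
    with ω hω
  rw [hω, Pi.sub_apply, condExp_const hm]

theorem stmt_10_general {Ω : Type*} [MeasurableSpace Ω] (P : Measure Ω) [IsProbabilityMeasure P]
    {α : Type*} [MeasurableSpace α]
    (Y : Ω → ℝ) (Zd : Ω → α) (Zt : Ω → ℝ)
    (hZd : Measurable Zd) (hZt : Measurable Zt)
    (hYint : Integrable Y P)
    (B : Set ℝ) (hB : MeasurableSet B)
    -- p(Ż) = P(Z̃ ∈ B | Ż) ∈ (ε, 1-ε) a.s.
    (p : Ω → ℝ) (ε : ℝ) (hε : 0 < ε)
    (hp : p =ᵐ[P] P[(Zt ⁻¹' B).indicator (fun _ => (1 : ℝ))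
        | MeasurableSpace.comap Zd inferInstance])
    (hpbd : ∀ᵐ ω ∂P, ε < p ω ∧ p ω < 1 - ε)
    -- μ(Ż) = E[Y | Ż, Z̃ ∈ B] and ν(Ż) = E[Y | Ż, Z̃ ∉ B]
    (μ ν : Ω → ℝ)
    (hμ : μ =ᵐ[P] fun ω =>
      (P[fun ω' => Y ω' * (Zt ⁻¹' B).indicator (fun _ => (1 : ℝ)) ω'
          | MeasurableSpace.comap Zd inferInstance]) ω / p ω)
    (hν : ν =ᵐ[P] fun ω =>
      (P[fun ω' => Y ω' * ((Zt ⁻¹' B)ᶜ).indicator (fun _ => (1 : ℝ)) ω'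
          | MeasurableSpace.comap Zd inferInstance]) ω / (1 - p ω)) :
    ∫ ω, (Y ω - μ ω) * (Zt ⁻¹' B).indicator (fun _ => (1 : ℝ)) ω / p ω
        - (Y ω - ν ω) * ((Zt ⁻¹' B)ᶜ).indicator (fun _ => (1 : ℝ)) ω / (1 - p ω) ∂P
      = 0 := by
  have hm := hZd.comap_le
  have hs : MeasurableSet (Zt ⁻¹' B) := hZt hB
  have h_ind {t : Set Ω} (ht : MeasurableSet t) :
      AEStronglyMeasurable (t.indicator fun _ => (1 : ℝ)) P ∧
        ∀ᵐ ω ∂P, ‖t.indicator (fun _ => (1 : ℝ)) ω‖ ≤ 1 :=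
    ⟨(measurable_const.indicator ht).aestronglyMeasurable,
      ae_of_all _ fun _ => (norm_indicator_le_norm_self _ _).trans_eq norm_one⟩
  have hp_compl : (fun ω => 1 - p ω) =ᵐ[P] P[(Zt ⁻¹' B)ᶜ.indicator fun _ => (1 : ℝ)
      | MeasurableSpace.comap Zd inferInstance] := by
    filter_upwards [hp, condExp_indicator_compl_ae_eq hm hs] with ω hpω hω
    rw [hω, hpω]
  have hpε : ∀ᵐ ω ∂P, ε ≤ p ω := hpbd.mono fun ω h => h.1.le
  have hpε_compl : ∀ᵐ ω ∂P, ε ≤ 1 - p ω := hpbd.mono fun ω h => by linarith [h.2]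
  rw [integral_sub
      (integrable_ipw_residual hm hYint (h_ind hs).1 (h_ind hs).2 hε hp hpε hμ)
      (integrable_ipw_residual hm hYint (h_ind hs.compl).1 (h_ind hs.compl).2 hε hp_compl
        hpε_compl hν),
    integral_ipw_residual_eq_zero hm hYint (h_ind hs).1 (h_ind hs).2 hε hp hpε hμ,
    integral_ipw_residual_eq_zero hm hYint (h_ind hs.compl).1 (h_ind hs.compl).2 hε hp_compl
      hpε_compl hν, sub_zero]

/-- Unbiasedness of the inverse-probability-weighted correction terms in the
Neyman-orthogonal score for the exposure-validity test: each weighted residual term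
has mean zero when the conditional means and the conditional cell probability are
correctly specified. -/
theorem stmt_10 {Ω : Type*} [MeasurableSpace Ω] (P : Measure Ω) [IsProbabilityMeasure P]
    {α : Type*} [MeasurableSpace α] [MeasurableSingletonClass α] [Countable α]
    (Y : Ω → ℝ) (Zd : Ω → α) (Zt : Ω → ℝ)
    (hY : Measurable Y) (hZd : Measurable Zd) (hZt : Measurable Zt)
    (hYint : Integrable Y P)
    (B : Set ℝ) (hB : MeasurableSet B)
    -- p(Ż) = P(Z̃ ∈ B | Ż) ∈ (ε, 1-ε) a.s.
    (p : Ω → ℝ) (ε : ℝ) (hε : 0 < ε)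
    (hp : p =ᵐ[P] P[(Zt ⁻¹' B).indicator (fun _ => (1 : ℝ))
        | MeasurableSpace.comap Zd inferInstance])
    (hpbd : ∀ᵐ ω ∂P, ε < p ω ∧ p ω < 1 - ε)
    -- μ(Ż) = E[Y | Ż, Z̃ ∈ B] and ν(Ż) = E[Y | Ż, Z̃ ∉ B]
    (μ ν : Ω → ℝ)
    (hμ : μ =ᵐ[P] fun ω =>
      (P[fun ω' => Y ω' * (Zt ⁻¹' B).indicator (fun _ => (1 : ℝ)) ω'
          | MeasurableSpace.comap Zd inferInstance]) ω / p ω)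
    (hν : ν =ᵐ[P] fun ω =>
      (P[fun ω' => Y ω' * ((Zt ⁻¹' B)ᶜ).indicator (fun _ => (1 : ℝ)) ω'
          | MeasurableSpace.comap Zd inferInstance]) ω / (1 - p ω)) :
    ∫ ω, (Y ω - μ ω) * (Zt ⁻¹' B).indicator (fun _ => (1 : ℝ)) ω / p ω
        - (Y ω - ν ω) * ((Zt ⁻¹' B)ᶜ).indicator (fun _ => (1 : ℝ)) ω / (1 - p ω) ∂P
      = 0 :=
  stmt_10_general P Y Zd Zt hZd hZt hYint B hB p ε hε hp hpbd μ ν hμ hν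
end

section
/- Let Y, D, Z, X be random variables with D ∈ {0,1}, Z ∈ {z, z′} discrete, Y integrable; assume consistency Y = Y(d,ζ) on {D=d, Z=ζ}, conditional exogeneity Y(d,ζ) ⟂ (D,Z) | X, and common support p(d,ζ|X) := P(D=d, Z=ζ|X) > 0 a.s. Then the total effect Δ(z,z′) := E[Y(1,z) − Y(0,z′)] satisfies Δ(z,z′) = E[ Y·D·1{Z=z}/p(1,z|X) − Y·(1−D)·1{Z=z′}/p(0,z′|X) ], and Δ(z,z′) = γ(z) + δ(0, z, z′), where γ(z) = E[Y(1,z) − Y(0,z)] is the direct effect and δ(0,z,z′) = E[Y(0,z) − Y(0,z′)] is the interference effect. -/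
open MeasureTheory ProbabilityTheory Set Filter

/-!
Conditional exogeneity makes `Y(d,ζ)` independent of the event `{D = d, Z = ζ}` under the
conditional law given `X`, so `E[Y(d,ζ) 1{D=d, Z=ζ} | X] = E[Y(d,ζ) | X] · p(d,ζ|X)`. Dividing by
the positive, `X`-measurable propensity score and taking expectations gives
`E[Y(d,ζ) 1{D=d, Z=ζ} / p(d,ζ|X)] = E[Y(d,ζ)]`; the weighted variable is integrable by the same
identity for `|Y(d,ζ)|`, with `1/p` truncated and monotone convergence. By consistency the observed
weighted outcomes are exactly these variables, and the decomposition is linearity of expectation.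
-/

lemma ProbabilityTheory.Kernel.IndepFun.ae_map_restrict_preimage_eq_smul_map
    {α Ω β : Type*} {mα : MeasurableSpace α} {mΩ : MeasurableSpace Ω} {mβ : MeasurableSpace β}
    {κ : Kernel α Ω} [IsMarkovKernel κ] {ν : Measure α} {W : Ω → ℝ} {V : Ω → β}
    (h : Kernel.IndepFun W V κ ν) (hW : Measurable W) {t : Set β} (ht : MeasurableSet t) :
    ∀ᵐ a ∂ν, ((κ a).restrict (V ⁻¹' t)).map W = κ a (V ⁻¹' t) • (κ a).map W := by
  -- The rational half-lines form a countable generating π-system, so one null set serves them all.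
  have hIic : ∀ᵐ a ∂ν, ∀ q : ℚ,
      κ a (W ⁻¹' Iic (q : ℝ) ∩ V ⁻¹' t) = κ a (W ⁻¹' Iic (q : ℝ)) * κ a (V ⁻¹' t) :=
    ae_all_iff.mpr fun q =>
      Kernel.indepFun_iff_measure_inter_preimage_eq_mul.mp h _ _ measurableSet_Iic ht
  filter_upwards [hIic] with a ha
  have := ((κ a).map W).smul_finite (measure_ne_top (κ a) (V ⁻¹' t))
  refine ext_of_generate_finite _
    (BorelSpace.measurable_eq.trans Real.borel_eq_generateFrom_Iic_rat)
    Real.isPiSystem_Iic_rat (fun s hs => ?_) ?_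
  · obtain ⟨q, rfl⟩ : ∃ q : ℚ, Iic (q : ℝ) = s := by simpa using hs
    rw [Measure.map_apply hW measurableSet_Iic, Measure.restrict_apply (hW measurableSet_Iic),
      Measure.smul_apply, Measure.map_apply hW measurableSet_Iic, smul_eq_mul, ha q, mul_comm]
  · rw [Measure.map_apply hW .univ, Measure.smul_apply, Measure.map_apply hW .univ,
      preimage_univ, Measure.restrict_apply_univ, smul_eq_mul, measure_univ, mul_one]

section

variable {Ω : Type*} {m : MeasurableSpace Ω} [mΩ : MeasurableSpace Ω] {μ : Measure Ω}

lemma lintegral_ofReal_mul_eq_iSup_min {h g : Ω → ℝ} (hh : AEMeasurable h μ)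
    (hg : AEMeasurable g μ) (hg_nonneg : 0 ≤ᵐ[μ] g) :
    ∫⁻ ω, ENNReal.ofReal (h ω * g ω) ∂μ = ⨆ n : ℕ, ∫⁻ ω, ENNReal.ofReal (min (h ω) n * g ω) ∂μ := by
  rw [← lintegral_iSup' (f := fun n ω => ENNReal.ofReal (min (h ω) n * g ω))
    (fun n => by fun_prop)]
  · refine lintegral_congr_ae ?_
    filter_upwards [hg_nonneg] with ω hω
    refine le_antisymm (le_iSup_of_le ⌈h ω⌉₊ ?_) (iSup_le fun n => ?_)
    · rw [min_eq_left (Nat.le_ceil _)]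
    · exact ENNReal.ofReal_le_ofReal (mul_le_mul_of_nonneg_right (min_le_left _ _) hω)
  · filter_upwards [hg_nonneg] with ω hω n k hnk
    exact ENNReal.ofReal_le_ofReal
      (mul_le_mul_of_nonneg_right (min_le_min le_rfl (Nat.cast_le.mpr hnk)) hω)

lemma lintegral_ofReal_mul_condExp [IsFiniteMeasure μ] (hm : m ≤ mΩ) {h f : Ω → ℝ}
    (hh : StronglyMeasurable[m] h) (hh_nonneg : 0 ≤ᵐ[μ] h) (hf : Integrable f μ)
    (hf_nonneg : 0 ≤ᵐ[μ] f) :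
    ∫⁻ ω, ENNReal.ofReal (h ω * f ω) ∂μ = ∫⁻ ω, ENNReal.ofReal (h ω * μ[f | m] ω) ∂μ := by
  have hhμ : AEMeasurable h μ := (hh.mono hm).measurable.aemeasurable
  rw [lintegral_ofReal_mul_eq_iSup_min hhμ hf.aemeasurable hf_nonneg,
    lintegral_ofReal_mul_eq_iSup_min hhμ integrable_condExp.aemeasurable
      (condExp_nonneg hf_nonneg)]
  refine iSup_congr fun n => ?_
  have hn : StronglyMeasurable[m] fun ω => min (h ω) n :=
    (hh.measurable.min measurable_const).stronglyMeasurable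
  have hn_bound : ∀ᵐ ω ∂μ, ‖min (h ω) n‖ ≤ n := by
    filter_upwards [hh_nonneg] with ω hω
    rw [Real.norm_of_nonneg (le_min hω n.cast_nonneg)]
    exact min_le_right _ _
  have hn_nonneg : ∀ {u : Ω → ℝ}, 0 ≤ᵐ[μ] u → 0 ≤ᵐ[μ] fun ω => min (h ω) n * u ω :=
    fun hu => by
      filter_upwards [hh_nonneg, hu] with ω hω huω
      exact mul_nonneg (le_min hω n.cast_nonneg) huω
  have hnμ : AEStronglyMeasurable (fun ω => min (h ω) n) μ := (hn.mono hm).aestronglyMeasurable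
  rw [← ofReal_integral_eq_lintegral_ofReal (hf.bdd_mul hnμ hn_bound) (hn_nonneg hf_nonneg),
    ← ofReal_integral_eq_lintegral_ofReal (integrable_condExp.bdd_mul hnμ hn_bound)
      (hn_nonneg (condExp_nonneg hf_nonneg)),
    ← integral_condExp hm]
  exact congrArg _
    (integral_congr_ae (condExp_stronglyMeasurable_mul_of_bound hm hn hf n hn_bound))

end

section

variable {Ω β : Type*} {m : MeasurableSpace Ω} [mΩ : MeasurableSpace Ω] [StandardBorelSpace Ω]
  {mβ : MeasurableSpace β} {μ : Measure Ω} [IsFiniteMeasure μ]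

lemma condExp_indicator_preimage_ae_eq_mul_of_condIndepFun (hm : m ≤ mΩ) {W : Ω → ℝ} {V : Ω → β}
    (hW : Measurable W) (hWi : Integrable W μ) (hV : Measurable V) (h : CondIndepFun m hm W V μ)
    {t : Set β} (ht : MeasurableSet t) :
    μ[(V ⁻¹' t).indicator W | m] =ᵐ[μ] μ[W | m] * μ⟦V ⁻¹' t | m⟧ := by
  have hA := hV ht
  filter_upwards [condExp_ae_eq_integral_condExpKernel hm (hWi.indicator hA),
    condExp_ae_eq_integral_condExpKernel hm hWi, condExpKernel_ae_eq_condExp hm hA,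
    ae_of_ae_trim hm (h.ae_map_restrict_preimage_eq_smul_map hW ht)] with ω hWA hW' hA' hmap
  have hid : ∀ ν : Measure Ω, ∫ x, id x ∂ν.map W = ∫ y, W y ∂ν := fun ν =>
    integral_map hW.aemeasurable aestronglyMeasurable_id
  rw [hWA, Pi.mul_apply, hW', ← hA', integral_indicator hA, ← hid, hmap, integral_smul_measure,
    hid, smul_eq_mul, measureReal_def, mul_comm]

variable {W : Ω → ℝ} {V : Ω → β} {t : Set β}

lemma integrable_inv_condProb_mul_indicator_of_condIndepFun (hm : m ≤ mΩ) (hW : Measurable W)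
    (hWi : Integrable W μ) (hV : Measurable V) (h : CondIndepFun m hm W V μ)
    (ht : MeasurableSet t) (hpos : ∀ᵐ ω ∂μ, 0 < (μ⟦V ⁻¹' t | m⟧) ω) :
    Integrable (fun ω => ((μ⟦V ⁻¹' t | m⟧) ω)⁻¹ * (V ⁻¹' t).indicator W ω) μ := by
  set G := μ⟦V ⁻¹' t | m⟧
  have hA := hV ht
  have hGinv : StronglyMeasurable[m] fun ω => (G ω)⁻¹ :=
    stronglyMeasurable_condExp.measurable.inv.stronglyMeasurable
  have habs : CondIndepFun m hm (fun ω => abs (W ω)) V μ := h.comp measurable_abs measurable_id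
  refine ⟨((hGinv.mono hm).aestronglyMeasurable).mul (hWi.indicator hA).1, ?_⟩
  rw [hasFiniteIntegral_iff_norm]
  calc ∫⁻ ω, ENNReal.ofReal ‖(G ω)⁻¹ * (V ⁻¹' t).indicator W ω‖ ∂μ
      = ∫⁻ ω, ENNReal.ofReal ((G ω)⁻¹ * (V ⁻¹' t).indicator (fun ω => abs (W ω)) ω) ∂μ := by
        refine lintegral_congr_ae ?_
        filter_upwards [hpos] with ω hω
        rw [norm_mul, norm_inv, Real.norm_of_nonneg hω.le, Real.norm_eq_abs]
        by_cases hωt : ω ∈ V ⁻¹' t <;> simp [hωt]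
    _ = ∫⁻ ω, ENNReal.ofReal ((G ω)⁻¹ * μ[(V ⁻¹' t).indicator (fun ω => abs (W ω)) | m] ω) ∂μ :=
        lintegral_ofReal_mul_condExp hm hGinv
          (by filter_upwards [hpos] with ω hω using inv_nonneg.mpr hω.le)
          (hWi.abs.indicator hA)
          (ae_of_all _ fun ω => indicator_nonneg (fun _ _ => abs_nonneg _) ω)
    _ = ∫⁻ ω, ENNReal.ofReal (μ[fun ω => abs (W ω) | m] ω) ∂μ := by
        refine lintegral_congr_ae ?_
        filter_upwards [condExp_indicator_preimage_ae_eq_mul_of_condIndepFun hm hW.abs hWi.abs hV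
          habs ht, hpos] with ω hfac hω
        rw [hfac, Pi.mul_apply, mul_comm, mul_inv_cancel_right₀ hω.ne']
    _ < ⊤ := integrable_condExp.lintegral_lt_top

variable {g : Ω → ℝ}

lemma integrable_indicator_div_of_condIndepFun (hm : m ≤ mΩ) (hW : Measurable W)
    (hWi : Integrable W μ) (hV : Measurable V) (h : CondIndepFun m hm W V μ)
    (ht : MeasurableSet t) (hg : g =ᵐ[μ] μ⟦V ⁻¹' t | m⟧) (hg_pos : ∀ᵐ ω ∂μ, 0 < g ω) :
    Integrable (fun ω => (V ⁻¹' t).indicator W ω / g ω) μ := by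
  refine (integrable_inv_condProb_mul_indicator_of_condIndepFun hm hW hWi hV h ht
    (by filter_upwards [hg, hg_pos] with ω h h' using h ▸ h')).congr ?_
  filter_upwards [hg] with ω hω
  rw [hω, div_eq_inv_mul]

lemma integral_indicator_div_of_condIndepFun (hm : m ≤ mΩ) (hW : Measurable W)
    (hWi : Integrable W μ) (hV : Measurable V) (h : CondIndepFun m hm W V μ)
    (ht : MeasurableSet t) (hg : g =ᵐ[μ] μ⟦V ⁻¹' t | m⟧) (hg_pos : ∀ᵐ ω ∂μ, 0 < g ω) :
    ∫ ω, (V ⁻¹' t).indicator W ω / g ω ∂μ = ∫ ω, W ω ∂μ := by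
  set G := μ⟦V ⁻¹' t | m⟧
  have hG_pos : ∀ᵐ ω ∂μ, 0 < G ω := by filter_upwards [hg, hg_pos] with ω h h' using h ▸ h'
  have hGinv : StronglyMeasurable[m] fun ω => (G ω)⁻¹ :=
    stronglyMeasurable_condExp.measurable.inv.stronglyMeasurable
  calc ∫ ω, (V ⁻¹' t).indicator W ω / g ω ∂μ
      = ∫ ω, (G ω)⁻¹ * (V ⁻¹' t).indicator W ω ∂μ := by
        refine integral_congr_ae ?_
        filter_upwards [hg] with ω hω
        rw [hω, div_eq_inv_mul]
    _ = ∫ ω, μ[fun ω => (G ω)⁻¹ * (V ⁻¹' t).indicator W ω | m] ω ∂μ :=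
        (integral_condExp hm).symm
    _ = ∫ ω, (G ω)⁻¹ * μ[(V ⁻¹' t).indicator W | m] ω ∂μ :=
        integral_congr_ae (condExp_mul_of_stronglyMeasurable_left hGinv
          (integrable_inv_condProb_mul_indicator_of_condIndepFun hm hW hWi hV h ht hG_pos)
          (hWi.indicator (hV ht)))
    _ = ∫ ω, μ[W | m] ω ∂μ := by
        refine integral_congr_ae ?_
        filter_upwards [condExp_indicator_preimage_ae_eq_mul_of_condIndepFun hm hW hWi hV h ht,
          hG_pos] with ω hfac hω
        rw [hfac, Pi.mul_apply, mul_comm, mul_inv_cancel_right₀ hω.ne']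
    _ = ∫ ω, W ω ∂μ := integral_condExp hm

end

theorem stmt_13_general {Ω : Type*} [MeasurableSpace Ω] [StandardBorelSpace Ω]
    (P : Measure Ω) [IsProbabilityMeasure P]
    (Y : Ω → ℝ) (D : Ω → ℝ) (Z : Ω → ℤ) (X : Ω → ℝ) (z z' : ℤ)
    (hD : Measurable D) (hZ : Measurable Z) (hX : Measurable X)
    (hDbin : ∀ ω, D ω = 0 ∨ D ω = 1)
    (Ypo : ℝ → ℤ → Ω → ℝ)
    (hYpoMeas : ∀ d ζ, Measurable (Ypo d ζ))
    (hYpoInt : ∀ d ζ, Integrable (Ypo d ζ) P)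
    -- consistency
    (hcons : ∀ d ζ ω, D ω = d → Z ω = ζ → Y ω = Ypo d ζ ω)
    -- conditional exogeneity  Y(d,ζ) ⟂ (D,Z) | X
    (hcondindep : ∀ d ∈ ({0, 1} : Set ℝ), ∀ ζ ∈ ({z, z'} : Set ℤ),
      CondIndepFun (MeasurableSpace.comap X inferInstance) hX.comap_le
        (Ypo d ζ) (fun ω => (D ω, Z ω)) P)
    -- common support: true propensity scores p(d,ζ|X), a.s. positive
    (ps : ℝ → ℤ → Ω → ℝ)
    (hps : ∀ d ζ, ps d ζ =ᵐ[P]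
      P[({ω' | D ω' = d ∧ Z ω' = ζ}).indicator (fun _ => (1 : ℝ))
        | MeasurableSpace.comap X inferInstance])
    (hpos : ∀ d ∈ ({0, 1} : Set ℝ), ∀ ζ ∈ ({z, z'} : Set ℤ), ∀ᵐ ω ∂P, 0 < ps d ζ ω) :
    (∫ ω, (Ypo 1 z ω - Ypo 0 z' ω) ∂P
        = ∫ ω, Y ω * D ω * ({ω' | Z ω' = z}).indicator (fun _ => (1 : ℝ)) ω / ps 1 z ω
            - Y ω * (1 - D ω) * ({ω' | Z ω' = z'}).indicator (fun _ => (1 : ℝ)) ω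
              / ps 0 z' ω ∂P)
    ∧ (∫ ω, (Ypo 1 z ω - Ypo 0 z' ω) ∂P
        = (∫ ω, (Ypo 1 z ω - Ypo 0 z ω) ∂P) + ∫ ω, (Ypo 0 z ω - Ypo 0 z' ω) ∂P) := by
  set V : Ω → ℝ × ℤ := fun ω => (D ω, Z ω)
  have hV : Measurable V := hD.prodMk hZ
  have hV_preimage (d : ℝ) (ζ : ℤ) : V ⁻¹' {(d, ζ)} = {ω | D ω = d ∧ Z ω = ζ} := by
    ext ω; simp [V, Prod.ext_iff]
  have ipw (d : ℝ) (hd : d ∈ ({0, 1} : Set ℝ)) (ζ : ℤ) (hζ : ζ ∈ ({z, z'} : Set ℤ)) :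
      Integrable (fun ω => (V ⁻¹' {(d, ζ)}).indicator (Ypo d ζ) ω / ps d ζ ω) P ∧
      ∫ ω, (V ⁻¹' {(d, ζ)}).indicator (Ypo d ζ) ω / ps d ζ ω ∂P = ∫ ω, Ypo d ζ ω ∂P := by
    have hps' := hV_preimage d ζ ▸ hps d ζ
    exact ⟨integrable_indicator_div_of_condIndepFun hX.comap_le (hYpoMeas d ζ) (hYpoInt d ζ) hV
        (hcondindep d hd ζ hζ) (measurableSet_singleton _) hps' (hpos d hd ζ hζ),
      integral_indicator_div_of_condIndepFun hX.comap_le (hYpoMeas d ζ) (hYpoInt d ζ) hV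
        (hcondindep d hd ζ hζ) (measurableSet_singleton _) hps' (hpos d hd ζ hζ)⟩
  obtain ⟨htreated_int, htreated⟩ := ipw 1 (by simp) z (by simp)
  obtain ⟨hcontrol_int, hcontrol⟩ := ipw 0 (by simp) z' (by simp)
  have htreated_obs (ω : Ω) : Y ω * D ω * ({ω' | Z ω' = z}).indicator (fun _ => (1 : ℝ)) ω
      = (V ⁻¹' {(1, z)}).indicator (Ypo 1 z) ω := by
    rcases hDbin ω with hd | hd <;> by_cases hz : Z ω = z <;>
      simp [V, hd, hz, hcons 1 z ω]
  have hcontrol_obs (ω : Ω) : Y ω * (1 - D ω) * ({ω' | Z ω' = z'}).indicator (fun _ => (1 : ℝ)) ω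
      = (V ⁻¹' {(0, z')}).indicator (Ypo 0 z') ω := by
    rcases hDbin ω with hd | hd <;> by_cases hz : Z ω = z' <;>
      simp [V, hd, hz, hcons 0 z' ω]
  have hsplit := integral_sub (hYpoInt 1 z) (hYpoInt 0 z')
  refine ⟨?_, ?_⟩
  · simp_rw [htreated_obs, hcontrol_obs]
    rw [integral_sub htreated_int hcontrol_int, htreated, hcontrol, hsplit]
  · rw [hsplit, integral_sub (hYpoInt 1 z) (hYpoInt 0 z),
      integral_sub (hYpoInt 0 z) (hYpoInt 0 z')]
    ring

/-- Identification and decomposition of the total effect under interference: the total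
effect `Δ(z,z')` is identified by inverse probability weighting with the conditional
propensity score, and decomposes into the direct effect `γ(z)` plus the interference
effect `δ(0,z,z')`. -/
theorem stmt_13 {Ω : Type*} [MeasurableSpace Ω] [StandardBorelSpace Ω]
    (P : Measure Ω) [IsProbabilityMeasure P]
    (Y : Ω → ℝ) (D : Ω → ℝ) (Z : Ω → ℤ) (X : Ω → ℝ) (z z' : ℤ) (hzz' : z ≠ z')
    (hY : Measurable Y) (hD : Measurable D) (hZ : Measurable Z) (hX : Measurable X)
    (hDbin : ∀ ω, D ω = 0 ∨ D ω = 1)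
    (hYint : Integrable Y P)
    (Ypo : ℝ → ℤ → Ω → ℝ)
    (hYpoMeas : ∀ d ζ, Measurable (Ypo d ζ))
    (hYpoInt : ∀ d ζ, Integrable (Ypo d ζ) P)
    -- consistency
    (hcons : ∀ d ζ ω, D ω = d → Z ω = ζ → Y ω = Ypo d ζ ω)
    -- conditional exogeneity  Y(d,ζ) ⟂ (D,Z) | X
    (hcondindep : ∀ d ∈ ({0, 1} : Set ℝ), ∀ ζ ∈ ({z, z'} : Set ℤ),
      CondIndepFun (MeasurableSpace.comap X inferInstance) hX.comap_le
        (Ypo d ζ) (fun ω => (D ω, Z ω)) P)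
    -- common support: true propensity scores p(d,ζ|X), a.s. positive
    (ps : ℝ → ℤ → Ω → ℝ)
    (hps : ∀ d ζ, ps d ζ =ᵐ[P]
      P[({ω' | D ω' = d ∧ Z ω' = ζ}).indicator (fun _ => (1 : ℝ))
        | MeasurableSpace.comap X inferInstance])
    (hpos : ∀ d ∈ ({0, 1} : Set ℝ), ∀ ζ ∈ ({z, z'} : Set ℤ), ∀ᵐ ω ∂P, 0 < ps d ζ ω) :
    (∫ ω, (Ypo 1 z ω - Ypo 0 z' ω) ∂P
        = ∫ ω, Y ω * D ω * ({ω' | Z ω' = z}).indicator (fun _ => (1 : ℝ)) ω / ps 1 z ω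
            - Y ω * (1 - D ω) * ({ω' | Z ω' = z'}).indicator (fun _ => (1 : ℝ)) ω
              / ps 0 z' ω ∂P)
    ∧ (∫ ω, (Ypo 1 z ω - Ypo 0 z' ω) ∂P
        = (∫ ω, (Ypo 1 z ω - Ypo 0 z ω) ∂P) + ∫ ω, (Ypo 0 z ω - Ypo 0 z' ω) ∂P) :=
  stmt_13_general P Y D Z X z z' hD hZ hX hDbin Ypo hYpoMeas hYpoInt hcons hcondindep ps hps hpos
end

section
/- Let Y be integrable and Ż, Z̃ finitely supported discrete random variables with P(Ż = ż, Z̃ = z̃) > 0 for all ż, z̃ in their supports. Then Y is mean-independent of Z̃ conditional on Ż (i.e., E[Y | Ż, Z̃] = E[Y | Ż] a.s.) if and only if for every ż and every measurable subset B of the support of Z̃ with P(Z̃ ∈ B | Ż = ż) ∈ (0,1), E[Y | Ż = ż, Z̃ ∈ B] = E[Y | Ż = ż, Z̃ ∉ B]. -/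
/-!
Given a random variable `f` with countably many values, `μ[Y | σ(f)]` is a.e. the conditional
mean of `Y` over the atom `{f = f ω}`. Forward: a cell `{Ż = ż, Z̃ ∈ B}` is `σ(Ż, Z̃)`-measurable,
so the mean of `Y` over it is the mean of `μ[Y | σ(Ż, Z̃)] = μ[Y | σ(Ż)]`, which is constant
`E[Y | Ż = ż]` on it; the same holds for the complementary cell. Backward: with `B = {z̃}` the
mean over `{Ż = ż, Z̃ = z̃}` equals the mean over the rest of `{Ż = ż}`, hence equals their
weighted average `E[Y | Ż = ż]`.
-/
open MeasureTheory ProbabilityTheory Set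

section CondMean

variable {Ω : Type*} {m m0 : MeasurableSpace Ω} {μ : Measure Ω} {Y g : Ω → ℝ} {s t : Set Ω}

lemma measureReal_mul_integral_cond [IsFiniteMeasure μ] (Y : Ω → ℝ) (s : Set Ω) :
    μ.real s * ∫ x, Y x ∂μ[|s] = ∫ x in s, Y x ∂μ := by
  rcases eq_or_ne (μ s) 0 with hs | hs
  · simp [Measure.restrict_eq_zero.mpr hs, measureReal_def, hs]
  · rw [ProbabilityTheory.cond, integral_smul_measure, ENNReal.toReal_inv, smul_eq_mul, ← mul_assoc,
      ← measureReal_def, mul_inv_cancel₀ ((measureReal_ne_zero_iff).mpr hs), one_mul]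

lemma integral_cond_condExp (hm : m ≤ m0) [SigmaFinite (μ.trim hm)] (hY : Integrable Y μ)
    (hs : MeasurableSet[m] s) : ∫ x, μ[Y | m] x ∂μ[|s] = ∫ x, Y x ∂μ[|s] := by
  rw [ProbabilityTheory.cond, integral_smul_measure, integral_smul_measure,
    setIntegral_condExp hm hY hs]

lemma integral_cond_of_forall_eq [IsFiniteMeasure μ] (hs : MeasurableSet s) (hs0 : μ s ≠ 0)
    {c : ℝ} (h : ∀ x ∈ s, g x = c) : ∫ x, g x ∂μ[|s] = c := by
  have := cond_isProbabilityMeasure (μ := μ) hs0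
  rw [integral_congr_ae (ae_cond_of_forall_mem hs h), integral_const, probReal_univ, one_smul]

lemma cond_pos_iff [IsFiniteMeasure μ] (hs : MeasurableSet s) : 0 < μ[t | s] ↔ μ (s ∩ t) ≠ 0 :=
  ⟨fun h => (inter_pos_of_cond_ne_zero hs h.ne').ne', cond_pos_of_inter_ne_zero hs⟩

lemma cond_lt_one_iff [IsFiniteMeasure μ] (hs : MeasurableSet s) (ht : MeasurableSet t)
    (hs0 : μ s ≠ 0) : μ[t | s] < 1 ↔ μ (s \ t) ≠ 0 := by
  have := cond_isProbabilityMeasure (μ := μ) hs0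
  rw [sdiff_eq, ← cond_pos_iff hs, prob_compl_eq_one_sub ht, tsub_pos_iff_lt]

-- `∫ Y ∂μ[|s]` is the `μ`-weighted average of the means over `s ∩ t` and `s \ t`.
lemma integral_cond_inter_eq_integral_cond [IsFiniteMeasure μ] (ht : MeasurableSet t)
    (hY : IntegrableOn Y s μ) (h0 : μ (s ∩ t) ≠ 0)
    (h : μ (s \ t) ≠ 0 → ∫ x, Y x ∂μ[|s ∩ t] = ∫ x, Y x ∂μ[|s \ t]) :
    ∫ x, Y x ∂μ[|s ∩ t] = ∫ x, Y x ∂μ[|s] := by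
  have hsplit := integral_inter_add_sdiff ht hY
  rw [← measureReal_mul_integral_cond, ← measureReal_mul_integral_cond,
    ← measureReal_mul_integral_cond, ← measureReal_inter_add_sdiff (s := s) ht] at hsplit
  have hdiff : μ.real (s \ t) * ∫ x, Y x ∂μ[|s \ t] = μ.real (s \ t) * ∫ x, Y x ∂μ[|s ∩ t] := by
    rcases eq_or_ne (μ (s \ t)) 0 with hd | hd
    · simp [measureReal_def, hd]
    · rw [h hd]
  have hpos : 0 < μ.real (s ∩ t) + μ.real (s \ t) :=
    add_pos_of_pos_of_nonneg (measureReal_nonneg.lt_of_ne ((measureReal_ne_zero_iff).mpr h0).symm)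
      measureReal_nonneg
  refine mul_left_cancel₀ hpos.ne' ?_
  linear_combination hsplit - hdiff

end CondMean

section Atoms

variable {Ω γ : Type*} {m m0 : MeasurableSpace Ω} {μ : Measure Ω} {Y : Ω → ℝ}
  [MeasurableSpace γ] [MeasurableSingletonClass γ] {f : Ω → γ}

lemma ae_measure_preimage_singleton_ne_zero [Countable γ] (hf : Measurable f) :
    ∀ᵐ ω ∂μ, μ (f ⁻¹' {f ω}) ≠ 0 :=
  ae_of_ae_map (hf.aemeasurable (μ := μ)) <| ae_iff_of_countable.mpr fun c hc => by
    rwa [Measure.map_apply hf (measurableSet_singleton c)] at hc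

variable [IsFiniteMeasure μ]

lemma condExp_comap_eq_integral_cond (hf : Measurable f) (hY : Integrable Y μ) {ω : Ω}
    (hω : μ (f ⁻¹' {f ω}) ≠ 0) :
    μ[Y | MeasurableSpace.comap f inferInstance] ω = ∫ x, Y x ∂μ[|f ⁻¹' {f ω}] := by
  have hatom : MeasurableSet[MeasurableSpace.comap f inferInstance] (f ⁻¹' {f ω}) :=
    ⟨{f ω}, measurableSet_singleton _, rfl⟩
  rw [← integral_cond_condExp hf.comap_le hY hatom, integral_cond_of_forall_eq
    (hf (measurableSet_singleton _)) hω]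
  exact fun x hx => stronglyMeasurable_condExp.factorsThrough hx

lemma condExp_comap_ae_eq_integral_cond [Countable γ] (hf : Measurable f) (hY : Integrable Y μ) :
    μ[Y | MeasurableSpace.comap f inferInstance] =ᵐ[μ] fun ω => ∫ x, Y x ∂μ[|f ⁻¹' {f ω}] := by
  filter_upwards [ae_measure_preimage_singleton_ne_zero hf] with ω hω
  exact condExp_comap_eq_integral_cond hf hY hω

lemma integral_cond_eq_integral_cond_preimage_of_condExp_ae_eq (hf : Measurable f) (hm : m ≤ m0)
    (hY : Integrable Y μ) (h : μ[Y | m] =ᵐ[μ] μ[Y | MeasurableSpace.comap f inferInstance])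
    {s : Set Ω} (hs : MeasurableSet[m] s) (hs0 : μ s ≠ 0) {c : γ} (hsc : s ⊆ f ⁻¹' {c}) :
    ∫ x, Y x ∂μ[|s] = ∫ x, Y x ∂μ[|f ⁻¹' {c}] := by
  rw [← integral_cond_condExp hm hY hs, integral_congr_ae (cond_absolutelyContinuous.ae_le h)]
  refine integral_cond_of_forall_eq (hm _ hs) hs0 fun x hx => ?_
  have hfx : f x = c := hsc hx
  have hc0 : μ (f ⁻¹' {c}) ≠ 0 := fun h0 => hs0 (measure_mono_null hsc h0)
  rw [condExp_comap_eq_integral_cond hf hY (hfx ▸ hc0), hfx]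

end Atoms

lemma condExp_comap_prodMk_ae_eq_of_integral_cond {Ω α β : Type*} [MeasurableSpace Ω]
    {μ : Measure Ω} [IsFiniteMeasure μ] [MeasurableSpace α] [MeasurableSingletonClass α]
    [Countable α] [MeasurableSpace β] [MeasurableSingletonClass β] [Countable β]
    {Y : Ω → ℝ} {X : Ω → α} {W : Ω → β} (hX : Measurable X) (hW : Measurable W)
    (hY : Integrable Y μ)
    (h : ∀ a b, μ (X ⁻¹' {a} ∩ W ⁻¹' {b}) ≠ 0 →
      ∫ x, Y x ∂μ[|X ⁻¹' {a} ∩ W ⁻¹' {b}] = ∫ x, Y x ∂μ[|X ⁻¹' {a}]) :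
    μ[Y | MeasurableSpace.comap (fun ω => (X ω, W ω)) inferInstance]
      =ᵐ[μ] μ[Y | MeasurableSpace.comap X inferInstance] := by
  have hXW : Measurable fun ω => (X ω, W ω) := hX.prodMk hW
  filter_upwards [condExp_comap_ae_eq_integral_cond hXW hY, condExp_comap_ae_eq_integral_cond hX hY,
    ae_measure_preimage_singleton_ne_zero hXW] with ω hω₁ hω₂ hω
  have hatom : (fun x => (X x, W x)) ⁻¹' {(X ω, W ω)} = X ⁻¹' {X ω} ∩ W ⁻¹' {W ω} := by
    ext; simp [Prod.ext_iff]
  rw [hω₁, hω₂, hatom]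
  exact h _ _ (hatom ▸ hω)

theorem stmt_14_general {Ω : Type*} [MeasurableSpace Ω] (P : Measure Ω) [IsProbabilityMeasure P]
    {α β : Type*} [Fintype α] [MeasurableSpace α] [MeasurableSingletonClass α]
    [Fintype β] [MeasurableSpace β] [MeasurableSingletonClass β]
    (Y : Ω → ℝ) (Zd : Ω → α) (Zt : Ω → β)
    (hZd : Measurable Zd) (hZt : Measurable Zt)
    (hYint : Integrable Y P) :
    (P[Y | MeasurableSpace.comap (fun ω => (Zd ω, Zt ω)) inferInstance]
        =ᵐ[P] P[Y | MeasurableSpace.comap Zd inferInstance])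
      ↔ ∀ (zd : α), 0 < P {ω | Zd ω = zd} →
          ∀ B : Set β, MeasurableSet B → B ⊆ {b | 0 < P {ω | Zt ω = b}} →
            0 < (P[|{ω | Zd ω = zd}]) (Zt ⁻¹' B) →
            (P[|{ω | Zd ω = zd}]) (Zt ⁻¹' B) < 1 →
            ∫ ω, Y ω ∂(P[|{ω | Zd ω = zd ∧ Zt ω ∈ B}])
              = ∫ ω, Y ω ∂(P[|{ω | Zd ω = zd ∧ Zt ω ∉ B}]) := by
  have hA : ∀ zd, MeasurableSet (Zd ⁻¹' {zd}) := fun zd => hZd (measurableSet_singleton zd)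
  have hcell : ∀ zd (B : Set β), MeasurableSet B → MeasurableSet[MeasurableSpace.comap
      (fun ω => (Zd ω, Zt ω)) inferInstance] (Zd ⁻¹' {zd} ∩ Zt ⁻¹' B) :=
    fun zd B hB => comap_measurable _ ((measurableSet_singleton zd).prod hB)
  constructor
  · intro h zd hzd B hB _ hpos hlt
    have hmean : ∀ C, MeasurableSet C → P (Zd ⁻¹' {zd} ∩ Zt ⁻¹' C) ≠ 0 →
        ∫ ω, Y ω ∂P[|Zd ⁻¹' {zd} ∩ Zt ⁻¹' C] = ∫ ω, Y ω ∂P[|Zd ⁻¹' {zd}] :=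
      fun C hC hC0 => integral_cond_eq_integral_cond_preimage_of_condExp_ae_eq hZd
        (hZd.prodMk hZt).comap_le hYint h (hcell zd C hC) hC0 inter_subset_left
    exact (hmean B hB ((cond_pos_iff (hA zd)).mp hpos)).trans
      (hmean Bᶜ hB.compl ((cond_lt_one_iff (hA zd) (hZt hB) hzd.ne').mp hlt)).symm
  · intro h
    refine condExp_comap_prodMk_ae_eq_of_integral_cond hZd hZt hYint fun zd zt h0 => ?_
    have hzd : P (Zd ⁻¹' {zd}) ≠ 0 := fun hz => h0 (measure_mono_null inter_subset_left hz)
    have hzt : MeasurableSet (Zt ⁻¹' {zt}) := hZt (measurableSet_singleton zt)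
    refine integral_cond_inter_eq_integral_cond hzt hYint.integrableOn h0 fun hdiff => ?_
    refine h zd (pos_iff_ne_zero.mpr hzd) {zt} (measurableSet_singleton zt) ?_
      ((cond_pos_iff (hA zd)).mpr h0) ((cond_lt_one_iff (hA zd) hzt hzd).mpr hdiff)
    rintro b rfl
    exact pos_iff_ne_zero.mpr fun hb => h0 (measure_mono_null inter_subset_right hb)

/-- Equivalence between conditional mean independence `E[Y | Ż, Z̃] = E[Y | Ż]` and the
partition-cell formulation used in the aggregated test statistic: conditional means of
`Y` agree across any cell `B` of the support of `Z̃` and its complement, given `Ż`. -/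
theorem stmt_14 {Ω : Type*} [MeasurableSpace Ω] (P : Measure Ω) [IsProbabilityMeasure P]
    {α β : Type*} [Fintype α] [MeasurableSpace α] [MeasurableSingletonClass α]
    [Fintype β] [MeasurableSpace β] [MeasurableSingletonClass β]
    (Y : Ω → ℝ) (Zd : Ω → α) (Zt : Ω → β)
    (hY : Measurable Y) (hZd : Measurable Zd) (hZt : Measurable Zt)
    (hYint : Integrable Y P)
    -- common support: every pair of support points occurs with positive probability
    (hsupp : ∀ (zd : α) (zt : β), 0 < P {ω | Zd ω = zd} → 0 < P {ω | Zt ω = zt} →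
      0 < P {ω | Zd ω = zd ∧ Zt ω = zt}) :
    (P[Y | MeasurableSpace.comap (fun ω => (Zd ω, Zt ω)) inferInstance]
        =ᵐ[P] P[Y | MeasurableSpace.comap Zd inferInstance])
      ↔ ∀ (zd : α), 0 < P {ω | Zd ω = zd} →
          ∀ B : Set β, MeasurableSet B → B ⊆ {b | 0 < P {ω | Zt ω = b}} →
            0 < (P[|{ω | Zd ω = zd}]) (Zt ⁻¹' B) →
            (P[|{ω | Zd ω = zd}]) (Zt ⁻¹' B) < 1 →
            ∫ ω, Y ω ∂(P[|{ω | Zd ω = zd ∧ Zt ω ∈ B}])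
              = ∫ ω, Y ω ∂(P[|{ω | Zd ω = zd ∧ Zt ω ∉ B}]) :=
  stmt_14_general P Y Zd Zt hZd hZt hYint
end
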